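/- arXiv:2511.07411 — 4 statements merged into one kernel-verified Lean document; each statement's English description precedes it below -/
import Mathlib

section
/- If κ is a measurable cardinal, then 𝔟_κ(∈*) = κ⁺ and 𝔡_κ(∈*) = 2^κ. -/
open Cardinal Set

universe u

namespace GenLoc

/-- `α` realizes its cardinal `κ = #α` as an order: every proper initial segment has
cardinality `< #α`.  Together with `[LinearOrder α] [WellFoundedLT α]` this says that
`α` is order-isomorphic to the initial ordinal of `#α`, i.e. `α` is a copy of the
cardinal `κ` with its ordinal order. -/
def IsKappaLike (α : Type u) [Preorder α] : Prop :=
  ∀ a : α, #(Set.Iio a) < #α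

/-- `A` is a bounded subset of `α` (bounded in `κ`). -/
def BddSet {α : Type u} [LT α] (A : Set α) : Prop :=
  ∃ b : α, ∀ x ∈ A, x < b

/-- The bounded ideal `J^κ_bd` on `κ`. -/
def bddIdeal (α : Type u) [LT α] : Set (Set α) :=
  { A | BddSet A }

/-- `I` is an ideal of subsets of `α` (of `κ`). -/
structure IsIdeal {α : Type u} (I : Set (Set α)) : Prop where
  empty_mem : (∅ : Set α) ∈ I
  subset_mem : ∀ A ∈ I, ∀ B : Set α, B ⊆ A → B ∈ I
  union_mem : ∀ A ∈ I, ∀ B ∈ I, A ∪ B ∈ I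

/-- An `h`-slalom: a map `φ : κ → P(κ)` with `|φ α| ≤ |h α|` for every `α < κ`
(`|h a|`, the cardinality of the ordinal `h a`, is `#(Set.Iio (h a))`). -/
def IsSlalom {α : Type u} [Preorder α] (h : α → α) (φ : α → Set α) : Prop :=
  ∀ a : α, #(φ a) ≤ #(Set.Iio (h a))

/-- `f ∈^I φ` : the set of points where `φ` fails to capture `f` is in the ideal `I`. -/
def LocIn {α : Type u} (I : Set (Set α)) (f : α → α) (φ : α → Set α) : Prop :=
  { a | f a ∉ φ a } ∈ I

/-- The localization bounding number `𝔟_h(∈^I)`. -/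
noncomputable def locB {α : Type u} [Preorder α] (I : Set (Set α)) (h : α → α) :
    Cardinal.{u} :=
  sInf { c | ∃ F : Set (α → α), #F = c ∧
    ∀ φ : α → Set α, IsSlalom h φ → ∃ f ∈ F, ¬ LocIn I f φ }

/-- The localization dominating number `𝔡_h(∈^I)`. -/
noncomputable def locD {α : Type u} [Preorder α] (I : Set (Set α)) (h : α → α) :
    Cardinal.{u} :=
  sInf { c | ∃ A : Set (α → Set α), #A = c ∧ (∀ φ ∈ A, IsSlalom h φ) ∧
    ∀ f : α → α, ∃ φ ∈ A, LocIn I f φ }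

/-- `U` is an ultrafilter of subsets of `α`. -/
structure IsUltrafilterOn {α : Type u} (U : Set (Set α)) : Prop where
  univ_mem : Set.univ ∈ U
  empty_not_mem : (∅ : Set α) ∉ U
  superset_mem : ∀ A ∈ U, ∀ B : Set α, A ⊆ B → B ∈ U
  inter_mem : ∀ A ∈ U, ∀ B ∈ U, A ∩ B ∈ U
  mem_or_compl_mem : ∀ A : Set α, A ∈ U ∨ Aᶜ ∈ U

/-- `U` is `κ`-complete: intersections of fewer than `κ` many members of `U` are in `U`. -/
def IsKappaComplete {α : Type u} (κ : Cardinal.{u}) (U : Set (Set α)) : Prop :=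
  ∀ S : Set (Set α), S ⊆ U → #S < κ → ⋂₀ S ∈ U

/-- `U` is σ-complete: closed under countable intersections. -/
def IsSigmaComplete {α : Type u} (U : Set (Set α)) : Prop :=
  ∀ f : ℕ → Set α, (∀ n, f n ∈ U) → (⋂ n, f n) ∈ U

/-- `U` is nonprincipal. -/
def IsNonprincipalOn {α : Type u} (U : Set (Set α)) : Prop :=
  ∀ a : α, ({a} : Set α) ∉ U

/-- `U` is a uniform ultrafilter: all its members have full size `#α`. -/
def IsUniform {α : Type u} (U : Set (Set α)) : Prop :=
  ∀ A ∈ U, #A = #α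

/-- `κ = #α` is a measurable cardinal: it is uncountable and carries a
`κ`-complete nonprincipal ultrafilter. -/
def IsMeasurableOn (α : Type u) : Prop :=
  ℵ₀ < #α ∧ ∃ U : Set (Set α),
    IsUltrafilterOn U ∧ IsNonprincipalOn U ∧ IsKappaComplete #α U

/-- `U` is a normal ultrafilter on `κ`: `κ`-complete, nonprincipal, and every function
which is regressive on a set in `U` is constant on a set in `U`. -/
def IsNormalUFOn {α : Type u} [LT α] (U : Set (Set α)) : Prop :=
  IsUltrafilterOn U ∧ IsNonprincipalOn U ∧ IsKappaComplete #α U ∧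
    ∀ f : α → α, { a | f a < a } ∈ U → ∃ c : α, { a | f a = c } ∈ U

/-- The `ξ`-th iterated cardinal successor of `κ`, taking suprema at limit stages. -/
noncomputable def iterSucc (κ : Cardinal.{u}) (ξ : Ordinal.{u}) : Cardinal.{u} :=
  Ordinal.limitRecOn ξ κ (fun _ ih => Order.succ ih)
    fun ξ' _ ih => ⨆ η : Set.Iio ξ', ih η.1 η.2

/-- A partial `h`-slalom with (unbounded) domain `D`. -/
def IsPartialSlalom {α : Type u} [Preorder α] (h : α → α) (D : Set α) (φ : α → Set α) :
    Prop :=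
  (∀ a : α, ∃ b ∈ D, a ≤ b) ∧ ∀ a ∈ D, #(φ a) ≤ #(Set.Iio (h a))

/-- `f ∈* φ` for a partial slalom with domain `D`: the set of points of `D` where
`φ` fails to capture `f` is bounded. -/
def PLocStar {α : Type u} [LT α] (D : Set α) (f : α → α) (φ : α → Set α) : Prop :=
  BddSet { a | a ∈ D ∧ f a ∉ φ a }

/-- The partial-slalom localization bounding number `𝔟_h(p∈*)`. -/
noncomputable def locBP {α : Type u} [Preorder α] (h : α → α) : Cardinal.{u} :=
  sInf { c | ∃ F : Set (α → α), #F = c ∧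
    ∀ (D : Set α) (φ : α → Set α), IsPartialSlalom h D φ → ∃ f ∈ F, ¬ PLocStar D f φ }

/-- The partial-slalom localization dominating number `𝔡_h(p∈*)`. -/
noncomputable def locDP {α : Type u} [Preorder α] (h : α → α) : Cardinal.{u} :=
  sInf { c | ∃ A : Set (Set α × (α → Set α)), #A = c ∧
    (∀ p ∈ A, IsPartialSlalom h p.1 p.2) ∧
    ∀ f : α → α, ∃ p ∈ A, PLocStar p.1 f p.2 }

/-- The unbounding number `𝔟_κ` (for the eventual domination order `≤*`). -/
noncomputable def bddNum (α : Type u) [Preorder α] : Cardinal.{u} :=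
  sInf { c | ∃ F : Set (α → α), #F = c ∧
    ∀ g : α → α, ∃ f ∈ F, ¬ BddSet { a | ¬ f a ≤ g a } }

/-- The dominating number `𝔡_κ` (for the eventual domination order `≤*`). -/
noncomputable def domNum (α : Type u) [Preorder α] : Cardinal.{u} :=
  sInf { c | ∃ F : Set (α → α), #F = c ∧
    ∀ g : α → α, ∃ f ∈ F, BddSet { a | ¬ g a ≤ f a } }

/-- `φ ⊆^I ψ` for slaloms. -/
def SubIn {α : Type u} (I : Set (Set α)) (φ ψ : α → Set α) : Prop :=
  { a | ¬ φ a ⊆ ψ a } ∈ I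

/-- `𝔟_h(⊆^I)`: the least size of a family of `h`-slaloms with no single
`h`-slalom `⊆^I`-above all of them. -/
noncomputable def subB {α : Type u} [Preorder α] (I : Set (Set α)) (h : α → α) :
    Cardinal.{u} :=
  sInf { c | ∃ F : Set (α → Set α), #F = c ∧ (∀ φ ∈ F, IsSlalom h φ) ∧
    ∀ ψ : α → Set α, IsSlalom h ψ → ∃ φ ∈ F, ¬ SubIn I φ ψ }

/-- `𝔡_h(⊆^I)`: the least size of a `⊆^I`-cofinal family of `h`-slaloms. -/
noncomputable def subD {α : Type u} [Preorder α] (I : Set (Set α)) (h : α → α) :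
    Cardinal.{u} :=
  sInf { c | ∃ A : Set (α → Set α), #A = c ∧ (∀ φ ∈ A, IsSlalom h φ) ∧
    ∀ ψ : α → Set α, IsSlalom h ψ → ∃ φ ∈ A, SubIn I ψ φ }

/-- `C` is a closed unbounded (club) subset of `κ`. -/
def IsClubIn (α : Type u) [Preorder α] (C : Set α) : Prop :=
  (∀ a : α, ∃ b ∈ C, a ≤ b) ∧
    ∀ a : α, (∃ b, b < a) → (∀ b, b < a → ∃ c ∈ C, b < c ∧ c < a) → a ∈ C

/-- `f ∈^cl φ` : `{α < κ : f α ∈ φ α}` contains a club. -/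
def ClubLocIn {α : Type u} [Preorder α] (f : α → α) (φ : α → Set α) : Prop :=
  ∃ C : Set α, IsClubIn α C ∧ ∀ a ∈ C, f a ∈ φ a

/-- `A` is a stationary subset of `κ`: it meets every club. -/
def IsStatIn (α : Type u) [Preorder α] (A : Set α) : Prop :=
  ∀ C : Set α, IsClubIn α C → (A ∩ C).Nonempty

/-- `R` is a stationary class: nonempty, consisting of stationary sets,
and upward closed under inclusion. -/
def IsStatClass (α : Type u) [Preorder α] (R : Set (Set α)) : Prop :=
  R.Nonempty ∧ (∀ A ∈ R, IsStatIn α A) ∧ ∀ A ∈ R, ∀ B : Set α, A ⊆ B → B ∈ R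

/-- `κ = #α` is completely ineffable: there is a stationary class `R` such that every
colouring `F : [A]² → 2` of pairs from some `A ∈ R` is constant on `[B]²` for some
`B ∈ R` with `B ⊆ A`. -/
def CompletelyIneffable (α : Type u) [Preorder α] : Prop :=
  ∃ R : Set (Set α), IsStatClass α R ∧
    ∀ A ∈ R, ∀ F : α → α → Fin 2,
      ∃ B ∈ R, B ⊆ A ∧ ∃ i : Fin 2, ∀ a ∈ B, ∀ b ∈ B, a < b → F a b = i

/-- `𝔭_κ`: the pseudo-intersection number of `κ`. -/
noncomputable def pseudoNum (α : Type u) : Cardinal.{u} :=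
  sInf { c | ∃ F : Set (Set α), #F = c ∧ (∀ B ∈ F, #B = #α) ∧
    (∀ G ⊆ F, #G < #α → #(⋂₀ G) = #α) ∧
    ¬ ∃ A : Set α, #A = #α ∧ ∀ B ∈ F, #(A \ B : Set α) < #α }

/-- `𝔰_κ`: the splitting number of `κ`. -/
noncomputable def splitNum (α : Type u) : Cardinal.{u} :=
  sInf { c | ∃ S : Set (Set α), #S = c ∧ (∀ B ∈ S, #B = #α) ∧
    ∀ A : Set α, #A = #α →
      ∃ B ∈ S, #(A ∩ B : Set α) = #α ∧ #(A \ B : Set α) = #α }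

/-- `|κ^κ / I|`: the cardinality of the quotient of `κ^κ` by equality mod `I`. -/
noncomputable def quotFull {α : Type u} (I : Set (Set α)) : Cardinal.{u} :=
  #(Quot fun f g : α → α => { a | f a ≠ g a } ∈ I)

/-- `|∏_{α<κ} t(α) / I|`: the quotient of `∏_{α<κ} t(α)` by equality mod `I`. -/
noncomputable def quotProd {α : Type u} [Preorder α] (I : Set (Set α)) (t : α → α) :
    Cardinal.{u} :=
  #(Quot fun f g : { f : α → α // ∀ a, f a < t a } => { a | f.1 a ≠ g.1 a } ∈ I)

/-- `|∏_{α<κ} h(α)⁺ / J|`: here `g < h(α)⁺` is expressed by `|g α| ≤ |h α|`. -/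
noncomputable def quotProdSucc {α : Type u} [Preorder α] (J : Set (Set α)) (h : α → α) :
    Cardinal.{u} :=
  #(Quot fun f g : { f : α → α // ∀ a, #(Set.Iio (f a)) ≤ #(Set.Iio (h a)) } =>
      { a | f.1 a ≠ g.1 a } ∈ J)

/-- `|∏_{α<κ} t(α) / U|` for an ultrafilter `U`, via equality mod `U`. -/
noncomputable def quotProdU {α : Type u} [Preorder α] (U : Set (Set α)) (t : α → α) :
    Cardinal.{u} :=
  #(Quot fun f g : { f : α → α // ∀ a, f a < t a } => { a | f.1 a = g.1 a } ∈ U)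

/-- `|∏_{α<κ} h(α)⁺ / U|` for an ultrafilter `U`, via equality mod `U`. -/
noncomputable def quotProdSuccU {α : Type u} [Preorder α] (U : Set (Set α)) (h : α → α) :
    Cardinal.{u} :=
  #(Quot fun f g : { f : α → α // ∀ a, #(Set.Iio (f a)) ≤ #(Set.Iio (h a)) } =>
      { a | f.1 a = g.1 a } ∈ U)

/-- `cf(κ^κ/U)`: the least size of a family cofinal in the ultraproduct order `<_U`. -/
noncomputable def cofUQuot {α : Type u} (U : Set (Set α)) [LT α] : Cardinal.{u} :=
  sInf { c | ∃ C : Set (α → α), #C = c ∧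
    ∀ g : α → α, ∃ f ∈ C, { a | g a < f a } ∈ U }

section Aux
set_option linter.unusedSectionVars false
variable {α : Type u} [LinearOrder α] [WellFoundedLT α]

omit [WellFoundedLT α] in
lemma no_max (hlike : IsKappaLike α) (hinf : ℵ₀ < #α) (a : α) : ∃ b, a < b := by
  by_contra hcon
  push_neg at hcon
  have h1 : (univ : Set α) ⊆ insert a (Iio a) := by
    intro x _
    rcases lt_or_eq_of_le (hcon x) with h | h
    · exact Or.inr h
    · exact Or.inl h
  have h2 : #α ≤ #(Iio a) + 1 := by
    calc #α = #(univ : Set α) := mk_univ.symm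
    _ ≤ #(insert a (Iio a) : Set α) := mk_le_mk_of_subset h1
    _ ≤ #(Iio a) + 1 := mk_insert_le
  exact absurd h2 (not_le_of_gt (Cardinal.add_lt_of_lt hinf.le (hlike a)
    (lt_of_lt_of_le one_lt_aleph0 hinf.le)))

omit [WellFoundedLT α] in
lemma bdd_small (hlike : IsKappaLike α) {A : Set α} (h : BddSet A) : #A < #α := by
  obtain ⟨b, hb⟩ := h
  exact lt_of_le_of_lt (mk_le_mk_of_subset fun x hx => hb x hx) (hlike b)


lemma uf_small_not_mem {U : Set (Set α)} (hU : IsUltrafilterOn U) (hnp : IsNonprincipalOn U)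
    (hcomp : IsKappaComplete #α U) {A : Set α} (hA : #A < #α) : A ∉ U := by
  intro hAU
  rcases A.eq_empty_or_nonempty with rfl | hne
  · exact hU.empty_not_mem hAU
  have hc : ∀ a : α, ({a} : Set α)ᶜ ∈ U :=
    fun a => (hU.mem_or_compl_mem {a}).resolve_left (hnp a)
  set S : Set (Set α) := (fun a : α => ({a} : Set α)ᶜ) '' A with hS
  have h1 : ⋂₀ S ∈ U := hcomp S (by rintro _ ⟨a, _, rfl⟩; exact hc a)
    (lt_of_le_of_lt mk_image_le hA)
  have h2 : ⋂₀ S = Aᶜ := by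
    ext x
    simp only [hS, sInter_image, mem_iInter, mem_compl_iff, mem_singleton_iff]
    constructor
    · intro h hx; exact h x hx rfl
    · rintro h a ha rfl; exact h ha
  rw [h2] at h1
  have := hU.inter_mem A hAU Aᶜ h1
  rw [inter_compl_self] at this
  exact hU.empty_not_mem this

lemma uf_cobdd_mem {U : Set (Set α)} (hU : IsUltrafilterOn U) (hnp : IsNonprincipalOn U)
    (hcomp : IsKappaComplete #α U) (hlike : IsKappaLike α) {A : Set α} (h : BddSet Aᶜ) : A ∈ U :=
  (hU.mem_or_compl_mem A).resolve_right (uf_small_not_mem hU hnp hcomp (bdd_small hlike h))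

lemma uf_mem_not_bdd {U : Set (Set α)} (hU : IsUltrafilterOn U) (hnp : IsNonprincipalOn U)
    (hcomp : IsKappaComplete #α U) (hlike : IsKappaLike α) {A : Set α} (h : A ∈ U) : ¬ BddSet A :=
  fun hb => uf_small_not_mem hU hnp hcomp (bdd_small hlike hb) h

lemma uf_const {U : Set (Set α)} (hU : IsUltrafilterOn U) (hnp : IsNonprincipalOn U)
    (hcomp : IsKappaComplete #α U) (hlike : IsKappaLike α) (hinf : ℵ₀ < #α) {f : α → α} {γ : α}
    (h : {a | f a ≤ γ} ∈ U) : ∃ c, {a | f a = c} ∈ U := by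
  by_contra hcon
  push_neg at hcon
  have hc : ∀ c : α, {a | f a = c}ᶜ ∈ U :=
    fun c => (hU.mem_or_compl_mem _).resolve_left (hcon c)
  set S : Set (Set α) := (fun c : α => {a | f a = c}ᶜ) '' (Iic γ) with hS
  have hIic : #(Iic γ) < #α := by
    have h1 : (Iic γ : Set α) ⊆ insert γ (Iio γ) := by
      intro x hx
      rcases lt_or_eq_of_le (mem_Iic.mp hx) with h | h
      · exact Or.inr h
      · exact Or.inl h
    calc #(Iic γ) ≤ #(insert γ (Iio γ) : Set α) := mk_le_mk_of_subset h1
    _ ≤ #(Iio γ) + 1 := mk_insert_le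
    _ < #α := Cardinal.add_lt_of_lt hinf.le (hlike γ) (lt_of_lt_of_le one_lt_aleph0 hinf.le)
  have h1 : ⋂₀ S ∈ U := hcomp S (by rintro _ ⟨c, _, rfl⟩; exact hc c)
    (lt_of_le_of_lt mk_image_le hIic)
  have h2 := hU.inter_mem _ h1 _ h
  have h3 : ⋂₀ S ∩ {a | f a ≤ γ} = ∅ := by
    ext x
    simp only [hS, sInter_image, mem_inter_iff, mem_iInter, mem_compl_iff, mem_setOf_eq,
      mem_empty_iff_false, iff_false, not_and]
    intro hall hle
    exact hall (f x) hle rfl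
  rw [h3] at h2
  exact hU.empty_not_mem h2

lemma exists_normal {U : Set (Set α)} (hU : IsUltrafilterOn U) (hnp : IsNonprincipalOn U)
    (hcomp : IsKappaComplete #α U) (hlike : IsKappaLike α) (hinf : ℵ₀ < #α) :
    ∃ D : Set (Set α), IsUltrafilterOn D ∧ IsNonprincipalOn D ∧ IsKappaComplete #α D ∧
      ∀ g : α → α, {a | g a < a} ∈ D → ∃ c, {a | g a = c} ∈ D := by
  classical
  -- P : functions unbounded mod U
  set P : Set (α → α) := {f | ∀ γ : α, {a | γ < f a} ∈ U} with hP
  have hid : (id : α → α) ∈ P := by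
    intro γ
    refine (hU.mem_or_compl_mem _).resolve_right ?_
    have hsub : {a : α | γ < a}ᶜ ⊆ insert γ (Iio γ) := by
      intro x hx
      simp only [mem_compl_iff, mem_setOf_eq, not_lt] at hx
      rcases lt_or_eq_of_le hx with h | h
      · exact Or.inr h
      · exact Or.inl h
    refine uf_small_not_mem hU hnp hcomp ?_
    calc #({a : α | γ < a}ᶜ : Set α) ≤ #(insert γ (Iio γ) : Set α) := mk_le_mk_of_subset hsub
    _ ≤ #(Iio γ) + 1 := mk_insert_le
    _ < #α := Cardinal.add_lt_of_lt hinf.le (hlike γ) (lt_of_lt_of_le one_lt_aleph0 hinf.le)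
  -- minimal element of P mod U
  have hmin : ∃ f ∈ P, ∀ g ∈ P, {a | g a < f a} ∉ U := by
    by_contra hcon
    push_neg at hcon
    have hch : ∀ x : ↥P, ∃ y : ↥P, {a | y.1 a < x.1 a} ∈ U := by
      rintro ⟨f, hf⟩
      obtain ⟨g, hg, hgu⟩ := hcon f hf
      exact ⟨⟨g, hg⟩, hgu⟩
    choose Φ hΦ using hch
    set seq : ℕ → ↥P := fun n => Φ^[n] ⟨id, hid⟩ with hseq
    have hstep : ∀ n, {a | (seq (n+1)).1 a < (seq n).1 a} ∈ U := by
      intro n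
      have : seq (n+1) = Φ (seq n) := Function.iterate_succ_apply' Φ n _
      rw [this]
      exact hΦ (seq n)
    have hint : (⋂ n, {a | (seq (n+1)).1 a < (seq n).1 a}) ∈ U := by
      rw [← sInter_range]
      refine hcomp _ ?_ ?_
      · rintro _ ⟨n, rfl⟩; exact hstep n
      · exact lt_of_le_of_lt ((Set.countable_range _).le_aleph0) hinf
    have hne : (⋂ n, {a | (seq (n+1)).1 a < (seq n).1 a}).Nonempty := by
      rcases eq_empty_or_nonempty (⋂ n, {a | (seq (n+1)).1 a < (seq n).1 a}) with h | h
      · rw [h] at hint; exact absurd hint hU.empty_not_mem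
      · exact h
    obtain ⟨a, ha⟩ := hne
    simp only [mem_iInter, mem_setOf_eq] at ha
    obtain ⟨m, ⟨n, hn⟩, hm⟩ := (IsWellFounded.wf : WellFounded ((· < ·) : α → α → Prop)).has_min
      (Set.range fun n => (seq n).1 a) ⟨(seq 0).1 a, 0, rfl⟩
    exact hm ((seq (n+1)).1 a) ⟨n+1, rfl⟩ (hn ▸ ha n)
  obtain ⟨f₀, hf₀P, hf₀min⟩ := hmin
  refine ⟨{X | f₀ ⁻¹' X ∈ U}, ?_, ?_, ?_, ?_⟩
  · constructor
    · show f₀ ⁻¹' univ ∈ U; rw [preimage_univ]; exact hU.univ_mem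
    · show f₀ ⁻¹' ∅ ∉ U; rw [preimage_empty]; exact hU.empty_not_mem
    · intro A hA B hAB
      exact hU.superset_mem _ hA _ (preimage_mono hAB)
    · intro A hA B hB
      show f₀ ⁻¹' (A ∩ B) ∈ U
      rw [preimage_inter]; exact hU.inter_mem _ hA _ hB
    · intro A
      rcases hU.mem_or_compl_mem (f₀ ⁻¹' A) with h | h
      · exact Or.inl h
      · exact Or.inr (by show f₀ ⁻¹' Aᶜ ∈ U; rwa [preimage_compl])
  · intro c hc
    have h1 : {a | c < f₀ a} ∈ U := hf₀P c
    have h2 : f₀ ⁻¹' {c} ∩ {a | c < f₀ a} ∈ U := hU.inter_mem _ hc _ h1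
    have h3 : f₀ ⁻¹' {c} ∩ {a | c < f₀ a} = ∅ := by
      ext x
      simp only [mem_inter_iff, mem_preimage, mem_singleton_iff, mem_setOf_eq,
        mem_empty_iff_false, iff_false, not_and]
      intro h; rw [h]; exact lt_irrefl c
    rw [h3] at h2
    exact hU.empty_not_mem h2
  · intro S hS hcard
    have h1 : ⋂₀ ((fun X => f₀ ⁻¹' X) '' S) ∈ U :=
      hcomp _ (by rintro _ ⟨X, hX, rfl⟩; exact hS hX) (lt_of_le_of_lt mk_image_le hcard)
    have h2 : f₀ ⁻¹' ⋂₀ S = ⋂₀ ((fun X => f₀ ⁻¹' X) '' S) := by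
      rw [sInter_image, preimage_sInter]
    show f₀ ⁻¹' ⋂₀ S ∈ U
    rw [h2]; exact h1
  · intro g hg
    by_cases hgP : (g ∘ f₀) ∈ P
    · exact absurd hg (hf₀min _ hgP)
    · simp only [hP, mem_setOf_eq, not_forall] at hgP
      obtain ⟨γ, hγ⟩ := hgP
      have h1 : {b | (g ∘ f₀) b ≤ γ} ∈ U := by
        have := (hU.mem_or_compl_mem {b | γ < (g ∘ f₀) b}).resolve_left hγ
        have heq : {b | γ < (g ∘ f₀) b}ᶜ = {b | (g ∘ f₀) b ≤ γ} := by
          ext x; simp [not_lt]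
        rwa [heq] at this
      obtain ⟨c, hc⟩ := uf_const hU hnp hcomp hlike hinf h1
      exact ⟨c, hc⟩

lemma strong_limit {U : Set (Set α)} (hU : IsUltrafilterOn U) (hnp : IsNonprincipalOn U)
    (hcomp : IsKappaComplete #α U) (hlike : IsKappaLike α) (b : α) :
    (2 : Cardinal.{u}) ^ #(Iio b) < #α := by
  classical
  by_contra hcon
  push_neg at hcon
  rw [← mk_set] at hcon
  obtain ⟨x⟩ := (Cardinal.le_def _ _).mp hcon
  set B : Iio b → Set α := fun i =>
    if {a : α | i ∈ x a} ∈ U then {a : α | i ∈ x a} else {a : α | i ∈ x a}ᶜ with hB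
  have hBU : ∀ i, B i ∈ U := by
    intro i
    simp only [hB]
    split
    · assumption
    · next h => exact (hU.mem_or_compl_mem _).resolve_left h
  have hint : ⋂₀ (range B) ∈ U :=
    hcomp _ (by rintro _ ⟨i, rfl⟩; exact hBU i) (lt_of_le_of_lt mk_range_le (hlike b))
  have hne : (⋂₀ (range B)).Nonempty := by
    rcases eq_empty_or_nonempty (⋂₀ range B) with h | h
    · rw [h] at hint; exact absurd hint hU.empty_not_mem
    · exact h
  obtain ⟨a, ha⟩ := hne
  have hsub : ⋂₀ (range B) ⊆ {a} := by
    intro a' ha'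
    have hxa : x a' = x a := by
      ext i
      have h1 : a ∈ B i := ha (B i) ⟨i, rfl⟩
      have h2 : a' ∈ B i := ha' (B i) ⟨i, rfl⟩
      simp only [hB] at h1 h2
      by_cases hc : {c : α | i ∈ x c} ∈ U
      · rw [if_pos hc] at h1 h2
        exact iff_of_true h2 h1
      · rw [if_neg hc] at h1 h2
        exact iff_of_false h2 h1
    exact x.injective hxa
  exact hnp a (hU.superset_mem _ hint _ hsub)

lemma exists_code (hlike : IsKappaLike α) (hinf : ℵ₀ < #α)
    (hsl : ∀ b : α, (2 : Cardinal.{u}) ^ #(Iio b) < #α) :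
    ∃ fA : Set α → α → α, (∀ A B : Set α, A ≠ B → BddSet {a | fA A a = fA B a}) ∧
      Function.Injective fA := by
  classical
  have hemb : ∀ a : α, Nonempty (Set (Iio a) ↪ α) := by
    intro a
    refine (Cardinal.le_def _ _).mp ?_
    rw [mk_set]
    exact (hsl a).le
  set C : ∀ a : α, Set (Iio a) ↪ α := fun a => Classical.choice (hemb a) with hC
  set fA : Set α → α → α := fun A a => C a (Subtype.val ⁻¹' A) with hfA
  have key : ∀ A B : Set α, A ≠ B → BddSet {a | fA A a = fA B a} := by
    intro A B hAB
    have : ∃ c, ¬ (c ∈ A ↔ c ∈ B) := by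
      by_contra h
      push_neg at h
      exact hAB (Set.ext fun c => h c)
    obtain ⟨c, hc⟩ := this
    obtain ⟨b, hb⟩ := no_max hlike hinf c
    refine ⟨b, ?_⟩
    intro x hx
    simp only [mem_setOf_eq, hfA] at hx
    have hpre : (Subtype.val ⁻¹' A : Set (Iio x)) = Subtype.val ⁻¹' B := (C x).injective hx
    by_contra hxb
    have hcx : c < x := lt_of_lt_of_le hb (not_lt.mp hxb)
    have := Set.ext_iff.mp hpre ⟨c, hcx⟩
    simp only [mem_preimage] at this
    exact hc this
  refine ⟨fA, key, ?_⟩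
  intro A B hAB
  by_contra hne
  have hbdd := key A B hne
  obtain ⟨b, hb⟩ := hbdd
  have : b ∈ {a | fA A a = fA B a} := by show fA A b = fA B b; rw [hAB]
  exact lt_irrefl b (hb b this)

lemma slalom_classes {D : Set (Set α)} (hD : IsUltrafilterOn D) (hnp : IsNonprincipalOn D)
    (hcomp : IsKappaComplete #α D) (hlike : IsKappaLike α) (hna : Nonempty α)
    (hnorm : ∀ g : α → α, {a | g a < a} ∈ D → ∃ c, {a | g a = c} ∈ D)
    {φ : α → Set α} (hφ : IsSlalom id φ) :
    ∃ E : α → α → α, ∀ f : α → α, LocIn (bddIdeal α) f φ →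
      ∃ c, {a | f a = E c a} ∈ D := by
  classical
  have hsurj : ∀ a : α, ∃ g : α → α, ∀ x ∈ φ a, ∃ ξ, ξ < a ∧ g ξ = x := by
    intro a
    rcases (φ a).eq_empty_or_nonempty with h | h
    · exact ⟨fun _ => Classical.arbitrary α, by simp [h]⟩
    · have hne : Nonempty ↥(φ a) := h.to_subtype
      obtain ⟨j⟩ := (Cardinal.le_def _ _).mp (hφ a)
      refine ⟨fun ξ => if hξ : ξ < a then ((Function.invFun j ⟨ξ, hξ⟩ : ↥(φ a)) : α)
        else Classical.arbitrary α, ?_⟩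
      intro x hx
      have hξ : ((j ⟨x, hx⟩ : ↥(Iio (id a))) : α) < a := mem_Iio.mp (j ⟨x, hx⟩).2
      refine ⟨(j ⟨x, hx⟩ : ↥(Iio (id a))), hξ, ?_⟩
      simp only
      rw [dif_pos hξ]
      have heq : (⟨((j ⟨x, hx⟩ : ↥(Iio (id a))) : α), hξ⟩ : ↥(Iio (id a))) = j ⟨x, hx⟩ :=
        Subtype.ext rfl
      rw [heq, Function.leftInverse_invFun j.injective ⟨x, hx⟩]
  choose E hE using hsurj
  refine ⟨fun c a => E a c, ?_⟩
  intro f hf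
  have hN : BddSet {a | f a ∉ φ a} := hf
  have hNc : {a | f a ∉ φ a}ᶜ ∈ D := by
    refine uf_cobdd_mem hD hnp hcomp hlike ?_
    rwa [compl_compl]
  set g : α → α := fun a => if h : ∃ ξ, ξ < a ∧ E a ξ = f a then h.choose else a with hg
  have hgood : ∀ a ∈ {a | f a ∉ φ a}ᶜ, g a < a ∧ E a (g a) = f a := by
    intro a ha
    simp only [mem_compl_iff, mem_setOf_eq, not_not] at ha
    have hex : ∃ ξ, ξ < a ∧ E a ξ = f a := hE a (f a) ha
    simp only [hg, dif_pos hex]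
    exact hex.choose_spec
  have hreg : {a | g a < a} ∈ D :=
    hD.superset_mem _ hNc _ (fun a ha => (hgood a ha).1)
  obtain ⟨c, hc⟩ := hnorm g hreg
  refine ⟨c, hD.superset_mem _ (hD.inter_mem _ hNc _ hc) _ ?_⟩
  rintro a ⟨ha1, ha2⟩
  have := (hgood a ha1).2
  simp only [mem_setOf_eq] at ha2 ⊢
  rw [← ha2]
  exact this.symm

end Aux

/-- If `κ` is a measurable cardinal then `𝔟_κ(∈*) = κ⁺` and
`𝔡_κ(∈*) = 2^κ`. -/
theorem statement0 (α : Type u) [LinearOrder α] [WellFoundedLT α]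
    (hlike : IsKappaLike α) (hmeas : IsMeasurableOn α) :
    locB (bddIdeal α) (id : α → α) = Order.succ #α ∧
      locD (bddIdeal α) (id : α → α) = 2 ^ #α := by
  classical
  obtain ⟨hinf, U, hU, hnpU, hcompU⟩ := hmeas
  have hna : Nonempty α := by
    rw [← Cardinal.mk_ne_zero_iff]; exact ne_of_gt (lt_trans aleph0_pos hinf)
  obtain ⟨D, hD, hnpD, hcompD, hnorm⟩ := exists_normal hU hnpU hcompU hlike hinf
  have hsl : ∀ b : α, (2 : Cardinal.{u}) ^ #(Iio b) < #α := strong_limit hD hnpD hcompD hlike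
  obtain ⟨fA, hcode, hinj⟩ := exists_code hlike hinf hsl
  have hdiff : ∀ A B : Set α, A ≠ B → {a | fA A a = fA B a} ∉ D :=
    fun A B h => uf_small_not_mem hD hnpD hcompD (bdd_small hlike (hcode A B h))
  -- the defining sets
  set Sb : Set Cardinal.{u} := { c | ∃ F : Set (α → α), #F = c ∧
    ∀ φ : α → Set α, IsSlalom id φ → ∃ f ∈ F, ¬ LocIn (bddIdeal α) f φ } with hSb
  set Sd : Set Cardinal.{u} := { c | ∃ A : Set (α → Set α), #A = c ∧
    (∀ φ ∈ A, IsSlalom id φ) ∧ ∀ f : α → α, ∃ φ ∈ A, LocIn (bddIdeal α) f φ } with hSd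
  -- 𝔟 upper bound witness
  have hBupper : Order.succ #α ∈ Sb := by
    obtain ⟨W, hW⟩ : ∃ W : Set (Set α), #W = Order.succ #α :=
      le_mk_iff_exists_set.mp (by rw [mk_set]; exact Order.succ_le_of_lt (cantor #α))
    refine ⟨fA '' W, (mk_image_eq hinj).trans hW, ?_⟩
    intro φ hφ
    by_contra hcon
    push_neg at hcon
    obtain ⟨E, hE⟩ := slalom_classes hD hnpD hcompD hlike hna hnorm hφ
    have hm : ∀ A : ↥W, ∃ c, {a | fA A.1 a = E c a} ∈ D :=
      fun A => hE (fA A.1) (hcon _ (mem_image_of_mem fA A.2))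
    choose m hmspec using hm
    have hmni : ¬ Function.Injective m := by
      intro hminj
      have h1 := mk_le_of_injective hminj
      rw [hW] at h1
      exact absurd h1 (Order.lt_succ #α).not_ge
    obtain ⟨A, B, hAB, hne⟩ := Function.not_injective_iff.mp hmni
    have h1 : {a | fA A.1 a = E (m A) a} ∩ {a | fA B.1 a = E (m B) a} ⊆
        {a | fA A.1 a = fA B.1 a} := by
      rw [hAB]
      rintro a ⟨h1, h2⟩
      simp only [mem_setOf_eq] at h1 h2 ⊢
      rw [h1, h2]
    exact hdiff A.1 B.1 (fun h => hne (Subtype.ext h))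
      (hD.superset_mem _ (hD.inter_mem _ (hmspec A) _ (hmspec B)) _ h1)
  -- 𝔟 lower bound
  have hBlower : ∀ c ∈ Sb, Order.succ #α ≤ c := by
    rintro c ⟨F, hF, hFu⟩
    rw [Order.succ_le_iff]
    by_contra hcon
    push_neg at hcon
    rcases F.eq_empty_or_nonempty with rfl | hFne
    · obtain ⟨f, hf, -⟩ := hFu (fun _ => ∅) (by intro a; simp)
      exact hf
    · have hne : Nonempty ↥F := hFne.to_subtype
      have hFle : #F ≤ #α := hF ▸ hcon
      obtain ⟨j⟩ := (Cardinal.le_def _ _).mp hFle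
      set e : α → ↥F := Function.invFun j with he
      have hesurj : Function.Surjective e := Function.invFun_surjective j.injective
      set φ : α → Set α := fun a => (fun ξ => (e ξ).1 a) '' Iio a with hφdef
      have hφ : IsSlalom id φ := by
        intro a
        simp only [hφdef, id_eq]
        exact mk_image_le
      obtain ⟨f, hfF, hfn⟩ := hFu φ hφ
      obtain ⟨ξ₀, hξ₀⟩ := hesurj ⟨f, hfF⟩
      obtain ⟨b, hb⟩ := no_max hlike hinf ξ₀
      refine hfn ⟨b, ?_⟩
      intro x hx
      simp only [mem_setOf_eq] at hx
      by_contra hxb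
      have hξx : ξ₀ < x := lt_of_lt_of_le hb (not_lt.mp hxb)
      exact hx ⟨ξ₀, hξx, by show (e ξ₀).1 x = f x; rw [hξ₀]⟩
  -- 𝔡 upper bound witness
  have hDupper : ∃ c ∈ Sd, c ≤ 2 ^ #α := by
    refine ⟨#({φ : α → Set α | IsSlalom id φ}), ⟨_, rfl, fun φ hφ => hφ, ?_⟩, ?_⟩
    · intro f
      refine ⟨fun a => if (Iio a).Nonempty then {f a} else ∅, ?_, ?_⟩
      · intro a
        simp only [id_eq]
        split
        · next h =>
          rw [mk_singleton]
          rw [Cardinal.one_le_iff_ne_zero, Cardinal.mk_ne_zero_iff]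
          exact h.to_subtype
        · rw [mk_emptyCollection]
          exact zero_le
      · show BddSet _
        rcases eq_empty_or_nonempty {a | f a ∉ (if (Iio a).Nonempty then ({f a} : Set α) else ∅)}
          with hemp | ⟨x₀, hx₀⟩
        · obtain ⟨b⟩ := hna
          exact ⟨b, by rw [hemp]; intro x hx; exact absurd hx (notMem_empty x)⟩
        · obtain ⟨b, hb⟩ := no_max hlike hinf x₀
          refine ⟨b, ?_⟩
          intro x hx
          simp only [mem_setOf_eq] at hx
          have hxe : ¬ (Iio x).Nonempty := by
            intro hne2
            rw [if_pos hne2] at hx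
            exact hx rfl
          have hxx₀ : x ≤ x₀ := by
            by_contra hgt
            exact hxe ⟨x₀, not_le.mp hgt⟩
          exact lt_of_le_of_lt hxx₀ hb
    · calc #({φ : α → Set α | IsSlalom id φ}) ≤ #(α → Set α) := mk_set_le _
      _ = #(Set α) ^ #α := (Cardinal.power_def _ _).symm
      _ = (2 ^ #α) ^ #α := by rw [mk_set]
      _ = 2 ^ (#α * #α) := (Cardinal.power_mul).symm
      _ = 2 ^ #α := by rw [Cardinal.mul_eq_self (le_of_lt hinf)]
  -- 𝔡 lower bound
  have hDlower : ∀ c ∈ Sd, 2 ^ #α ≤ c := by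
    rintro c ⟨A, hA, hslA, hcov⟩
    have hEex : ∀ p : ↥A, ∃ E : α → α → α, ∀ f : α → α, LocIn (bddIdeal α) f p.1 →
        ∃ c0, {a | f a = E c0 a} ∈ D :=
      fun p => slalom_classes hD hnpD hcompD hlike hna hnorm (hslA p.1 p.2)
    choose E hEspec using hEex
    have hm : ∀ B : Set α, ∃ p : ↥A, ∃ c0 : α, {a | fA B a = E p c0 a} ∈ D := by
      intro B
      obtain ⟨φ, hφA, hloc⟩ := hcov (fA B)
      obtain ⟨c0, hc0⟩ := hEspec ⟨φ, hφA⟩ (fA B) hloc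
      exact ⟨⟨φ, hφA⟩, c0, hc0⟩
    choose p c0 hpc using hm
    have hminj : Function.Injective (fun B : Set α => (p B, c0 B)) := by
      intro B B' hBB
      simp only [Prod.mk.injEq] at hBB
      by_contra hne
      have h1 : {a | fA B a = E (p B) (c0 B) a} ∩ {a | fA B' a = E (p B') (c0 B') a} ⊆
          {a | fA B a = fA B' a} := by
        rw [hBB.1, hBB.2]
        rintro a ⟨h1, h2⟩
        simp only [mem_setOf_eq] at h1 h2 ⊢
        rw [h1, h2]
      exact hdiff B B' hne
        (hD.superset_mem _ (hD.inter_mem _ (hpc B) _ (hpc B')) _ h1)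
    have h1 : (2 : Cardinal.{u}) ^ #α ≤ #(↥A × α) := by
      rw [← mk_set]
      exact mk_le_of_injective hminj
    have h2 : #(↥A × α) = c * #α := by
      rw [Cardinal.mk_prod, Cardinal.lift_id, Cardinal.lift_id, hA]
    rw [h2] at h1
    have h3 := h1.trans (Cardinal.mul_le_max c #α)
    rcases le_or_gt (2 ^ #α) c with h | h
    · exact h
    · exfalso
      rcases le_max_iff.mp h3 with h4 | h4
      · rcases le_max_iff.mp h4 with h5 | h5
        · exact absurd h5 (not_le.mpr h)
        · exact absurd h5 (not_le.mpr (cantor #α))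
      · exact absurd (h4.trans hinf.le) (not_le.mpr (cantor #α))
  constructor
  · exact le_antisymm (csInf_le' hBupper) (le_csInf ⟨_, hBupper⟩ hBlower)
  · obtain ⟨c, hcSd, hcle⟩ := hDupper
    exact le_antisymm ((csInf_le' hcSd).trans hcle) (le_csInf ⟨_, hcSd⟩ hDlower)

end GenLoc
end

section
/- If κ is a measurable cardinal, ξ < κ is an ordinal, and 𝔡_{id^{+ξ}}(∈*) < 2^κ, then 2^κ ≤ κ^{+ξ}. -/
open Cardinal Set

universe u

namespace GenLoc

-- ===== auxiliary lemmas =====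

section Basic
variable {α : Type u} {U : Set (Set α)}

lemma compl_mem (hU : IsUltrafilterOn U) {A : Set α} (h : A ∉ U) : Aᶜ ∈ U :=
  (hU.mem_or_compl_mem A).resolve_left h

lemma not_mem_of_compl_mem (hU : IsUltrafilterOn U) {A : Set α} (h : Aᶜ ∈ U) : A ∉ U := by
  intro hA
  have := hU.inter_mem A hA Aᶜ h
  rw [Set.inter_compl_self] at this
  exact hU.empty_not_mem this

lemma mem_of_superset (hU : IsUltrafilterOn U) {A B : Set α} (h : A ∈ U) (hAB : A ⊆ B) :
    B ∈ U := hU.superset_mem A h B hAB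

lemma nonempty_of_mem (hU : IsUltrafilterOn U) {A : Set α} (h : A ∈ U) : A.Nonempty := by
  rcases A.eq_empty_or_nonempty with rfl | hne
  · exact absurd h hU.empty_not_mem
  · exact hne

lemma small_not_mem (hU : IsUltrafilterOn U) (hnp : IsNonprincipalOn U)
    (hcomp : IsKappaComplete #α U) {A : Set α} (hA : #A < #α) : A ∉ U := by
  set S : Set (Set α) := (fun x => ({x}ᶜ : Set α)) '' A with hS
  have hSU : S ⊆ U := by
    rintro s ⟨x, _, rfl⟩
    exact compl_mem hU (hnp x)
  have hScard : #S < #α := lt_of_le_of_lt (Cardinal.mk_image_le) hA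
  have hInter : ⋂₀ S = Aᶜ := by
    ext y
    simp only [Set.mem_sInter, hS, Set.mem_image, Set.mem_compl_iff, Set.mem_singleton_iff]
    constructor
    · intro h hy
      exact h ({y}ᶜ) ⟨y, hy, rfl⟩ rfl
    · rintro hy t ⟨x, hx, rfl⟩
      simp only [Set.mem_compl_iff, Set.mem_singleton_iff]
      rintro rfl; exact hy hx
  have := hcomp S hSU hScard
  rw [hInter] at this
  exact not_mem_of_compl_mem hU this

lemma exists_piece (hU : IsUltrafilterOn U) (hcomp : IsKappaComplete #α U)
    (PP : Set (Set α)) (hPP : #PP < #α) (hcov : Set.univ ⊆ ⋃₀ PP) : ∃ A ∈ PP, A ∈ U := by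
  by_contra hcon
  push_neg at hcon
  set S : Set (Set α) := compl '' PP with hS
  have hSU : S ⊆ U := by
    rintro s ⟨A, hA, rfl⟩
    exact compl_mem hU (hcon A hA)
  have hScard : #S < #α := lt_of_le_of_lt (Cardinal.mk_image_le) hPP
  have hInter : ⋂₀ S = (⋃₀ PP)ᶜ := by
    ext y
    simp [hS, Set.mem_sInter]
  have hmem := hcomp S hSU hScard
  rw [hInter] at hmem
  have : (⋃₀ PP) ∈ U := mem_of_superset hU hU.univ_mem hcov
  have := hU.inter_mem _ this _ hmem
  rw [Set.inter_compl_self] at this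
  exact hU.empty_not_mem this

lemma sigma_complete (hU : IsUltrafilterOn U) (hcomp : IsKappaComplete #α U)
    (hbig : ℵ₀ < #α) (f : ℕ → Set α) (hf : ∀ n, f n ∈ U) : (⋂ n, f n) ∈ U := by
  have h0 : #(Set.range f) ≤ ℵ₀ := Cardinal.mk_le_aleph0_iff.2 (Set.countable_range f).to_subtype
  have h1 : #(Set.range f) < #α := lt_of_le_of_lt h0 hbig
  have := hcomp (Set.range f) (by rintro s ⟨n, rfl⟩; exact hf n) h1
  rwa [Set.sInter_range] at this

end Basic

section Normal
variable {α : Type u} [LinearOrder α] [WellFoundedLT α]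

lemma wf_ultraLT {U : Set (Set α)} (hU : IsUltrafilterOn U) (hcomp : IsKappaComplete #α U)
    (hbig : ℵ₀ < #α) :
    WellFounded (fun f g : α → α => {a | f a < g a} ∈ U) := by
  set r := fun f g : α → α => {a | f a < g a} ∈ U with hr
  haveI : IsIrrefl (α → α) r := ⟨by
    intro f hf
    have h0 : {a | f a < f a} = (∅ : Set α) := by ext a; simp
    apply hU.empty_not_mem
    rw [← h0]; exact hf⟩
  haveI : IsTrans (α → α) r := ⟨by
    intro f g h hfg hgh
    have := hU.inter_mem _ hfg _ hgh
    exact mem_of_superset hU this fun a ⟨h1, h2⟩ => lt_trans h1 h2⟩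
  haveI : IsStrictOrder (α → α) r := { }
  rw [RelEmbedding.wellFounded_iff_isEmpty]
  constructor
  intro e
  have hA : ∀ n : ℕ, {a | e (n+1) a < e n a} ∈ U := fun n =>
    e.map_rel_iff.2 (Nat.lt_succ_self n)
  obtain ⟨a, ha⟩ := nonempty_of_mem hU (sigma_complete hU hcomp hbig _ hA)
  simp only [Set.mem_iInter, Set.mem_setOf_eq] at ha
  exact (RelEmbedding.wellFounded_iff_isEmpty.1
    (IsWellFounded.wf : WellFounded ((· < ·) : α → α → Prop))).elim
    (RelEmbedding.natGT (fun n => e n a) ha)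

lemma exists_normal_s3 (hmeas : IsMeasurableOn α) : ∃ U : Set (Set α), IsNormalUFOn U := by
  obtain ⟨hbig, U0, hU0, hnp0, hcomp0⟩ := hmeas
  set r := fun f g : α → α => {a | f a < g a} ∈ U0 with hr
  have hwf : WellFounded r := wf_ultraLT hU0 hcomp0 hbig
  set P := {f : α → α | ∀ c, {a | f a = c} ∉ U0} with hP
  have hPne : (id : α → α) ∈ P := by
    intro c
    have : {a : α | id a = c} = {c} := by ext a; simp
    rw [this]; exact hnp0 c
  set f0 := hwf.min P ⟨id, hPne⟩ with hf0
  have hf0P : f0 ∈ P := hwf.min_mem P ⟨id, hPne⟩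
  set U := {A : Set α | f0 ⁻¹' A ∈ U0} with hUdef
  have hUuf : IsUltrafilterOn U := by
    constructor
    · show f0 ⁻¹' Set.univ ∈ U0; rw [Set.preimage_univ]; exact hU0.univ_mem
    · show ¬ f0 ⁻¹' ∅ ∈ U0; rw [Set.preimage_empty]; exact hU0.empty_not_mem
    · intro A hA B hAB
      exact mem_of_superset hU0 hA (Set.preimage_mono hAB)
    · intro A hA B hB
      show f0 ⁻¹' (A ∩ B) ∈ U0; rw [Set.preimage_inter]; exact hU0.inter_mem _ hA _ hB
    · intro A
      rcases hU0.mem_or_compl_mem (f0 ⁻¹' A) with h | h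
      · exact Or.inl h
      · right; show f0 ⁻¹' Aᶜ ∈ U0; rw [Set.preimage_compl]; exact h
  have hUnp : IsNonprincipalOn U := by
    intro c hc
    have : f0 ⁻¹' {c} = {a | f0 a = c} := by ext a; simp
    rw [hUdef] at hc; simp only [Set.mem_setOf_eq] at hc; rw [this] at hc
    exact hf0P c hc
  have hUcomp : IsKappaComplete #α U := by
    intro S hS hcard
    show f0 ⁻¹' ⋂₀ S ∈ U0
    have : f0 ⁻¹' ⋂₀ S = ⋂₀ ((f0 ⁻¹' ·) '' S) := by
      rw [Set.sInter_image, Set.preimage_sInter]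
    rw [this]
    refine hcomp0 _ ?_ (lt_of_le_of_lt Cardinal.mk_image_le hcard)
    rintro s ⟨A, hA, rfl⟩
    exact hS hA
  refine ⟨U, hUuf, hUnp, hUcomp, ?_⟩
  intro g hg
  have hB : {b | g (f0 b) < f0 b} ∈ U0 := hg
  set g'' := fun b => if g (f0 b) < f0 b then g (f0 b) else f0 b with hg''
  have hrg : r g'' f0 := by
    refine mem_of_superset hU0 hB ?_
    intro b hb
    simp only [Set.mem_setOf_eq] at hb ⊢
    rw [hg'']; simp only [if_pos hb]; exact hb
  have : g'' ∉ P := fun hmem => hwf.not_lt_min P hmem hrg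
  rw [hP] at this; simp only [Set.mem_setOf_eq, not_forall, not_not] at this
  obtain ⟨c, hc⟩ := this
  have : {b | g (f0 b) = c} ∈ U0 := by
    refine mem_of_superset hU0 (hU0.inter_mem _ hc _ hB) ?_
    rintro b ⟨h1, h2⟩
    simp only [Set.mem_setOf_eq] at h1 h2 ⊢
    rw [hg''] at h1; simpa [if_pos h2] using h1
  exact ⟨c, this⟩

end Normal

section IterSucc
variable {κ : Cardinal.{u}}

lemma iterSucc_zero (κ : Cardinal.{u}) : iterSucc κ 0 = κ :=
  Ordinal.limitRecOn_zero _ _ _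

lemma iterSucc_succ (κ : Cardinal.{u}) (ξ : Ordinal.{u}) :
    iterSucc κ (Order.succ ξ) = Order.succ (iterSucc κ ξ) :=
  Ordinal.limitRecOn_succ _ _ _ _

lemma iterSucc_limit (κ : Cardinal.{u}) {ξ : Ordinal.{u}} (h : Order.IsSuccLimit ξ) :
    iterSucc κ ξ = ⨆ η : Set.Iio ξ, iterSucc κ η.1 :=
  Ordinal.limitRecOn_limit _ _ _ _ h

lemma iterSucc_bddAbove (κ : Cardinal.{u}) (ξ : Ordinal.{u}) :
    BddAbove (Set.range fun η : Set.Iio ξ => iterSucc κ η.1) :=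
  Cardinal.bddAbove_of_small

lemma iterSucc_strict_mono (κ : Cardinal.{u}) :
    ∀ ξ : Ordinal.{u}, ∀ η < ξ, iterSucc κ η < iterSucc κ ξ := by
  intro ξ
  induction ξ using Ordinal.induction with
  | _ ξ IH =>
    rcases Ordinal.zero_or_succ_or_isSuccLimit ξ with rfl | ⟨ζ, rfl⟩ | hlim
    · intro η hη; exact absurd hη (not_lt_zero : ¬ η < 0)
    · intro η hη
      rw [iterSucc_succ]
      rcases (Order.lt_succ_iff.1 hη).lt_or_eq with h | rfl
      · exact lt_trans (IH ζ (Order.lt_succ ζ) η h) (Order.lt_succ _)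
      · exact Order.lt_succ _
    · intro η hη
      have h1 : iterSucc κ η < iterSucc κ (Order.succ η) := by
        rw [iterSucc_succ]; exact Order.lt_succ _
      refine lt_of_lt_of_le h1 ?_
      rw [iterSucc_limit κ hlim]
      exact le_ciSup (iterSucc_bddAbove κ ξ) (⟨Order.succ η, hlim.succ_lt hη⟩ : Set.Iio ξ)

lemma iterSucc_mono (κ : Cardinal.{u}) {η ξ : Ordinal.{u}} (h : η ≤ ξ) :
    iterSucc κ η ≤ iterSucc κ ξ := by
  rcases h.lt_or_eq with h | rfl
  · exact (iterSucc_strict_mono κ ξ η h).le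
  · exact le_rfl

lemma self_le_iterSucc (κ : Cardinal.{u}) (ξ : Ordinal.{u}) : κ ≤ iterSucc κ ξ := by
  have := iterSucc_mono κ (zero_le : (0 : Ordinal.{u}) ≤ ξ)
  rwa [iterSucc_zero] at this

lemma lt_iterSucc_limit {κ : Cardinal.{u}} {ξ : Ordinal.{u}} (hlim : Order.IsSuccLimit ξ)
    {x : Cardinal.{u}} (hx : x < iterSucc κ ξ) : ∃ η < ξ, x < iterSucc κ η := by
  by_contra hcon
  push_neg at hcon
  have : iterSucc κ ξ ≤ x := by
    rw [iterSucc_limit κ hlim]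
    haveI : Nonempty (Set.Iio ξ) := ⟨⟨0, hlim.pos⟩⟩
    exact ciSup_le fun η => hcon η.1 η.2
  exact absurd hx (not_lt.2 this)

end IterSucc

section QuotMach
variable {α : Type u} [LinearOrder α]

/-- Equality modulo `U` on a product of sets of ordinals. -/
def prodRel (U : Set (Set α)) (s : α → Ordinal.{u}) :
    {f : α → Ordinal.{u} // ∀ a, f a < s a} → {f : α → Ordinal.{u} // ∀ a, f a < s a} → Prop :=
  fun f g => {a | f.1 a = g.1 a} ∈ U

lemma prodRel_equivalence {U : Set (Set α)} (huf : IsUltrafilterOn U) (s : α → Ordinal.{u}) :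
    Equivalence (prodRel U s) := by
  constructor
  · intro f
    have : {a | f.1 a = f.1 a} = Set.univ := by ext a; simp
    show {a | f.1 a = f.1 a} ∈ U
    rw [this]; exact huf.univ_mem
  · intro f g h
    refine mem_of_superset huf h ?_
    intro a ha; exact ha.symm
  · intro f g h hfg hgh
    refine mem_of_superset huf (huf.inter_mem _ hfg _ hgh) ?_
    rintro a ⟨h1, h2⟩; exact h1.trans h2

lemma prodRel_mk_eq_iff {U : Set (Set α)} (huf : IsUltrafilterOn U) {s : α → Ordinal.{u}}
    {f g : {f : α → Ordinal.{u} // ∀ a, f a < s a}} :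
    Quot.mk (prodRel U s) f = Quot.mk (prodRel U s) g ↔ prodRel U s f g := by
  constructor
  · intro h
    exact ((prodRel_equivalence huf s).eqvGen_iff).1 (Quot.eq.1 h)
  · exact Quot.sound

/-- From an injection into a smaller universe. -/
lemma mk_le_lift_of_injective {β : Type (u+1)} {γ : Type u} {F : β → γ}
    (hF : Function.Injective F) : #β ≤ Cardinal.lift.{u+1} #γ := by
  have := Cardinal.lift_mk_le'.2 ⟨⟨F, hF⟩⟩
  rwa [Cardinal.lift_id'.{u, u+1}] at this

lemma embed_Iio_ord_of_card_le {o : Ordinal.{u}} {a : α} (h : o.card ≤ #(Set.Iio a)) :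
    Nonempty ((Set.Iio o) ↪ (Set.Iio a)) := by
  rw [← Cardinal.lift_mk_le', Ordinal.mk_Iio_ordinal, Cardinal.lift_lift]
  exact Cardinal.lift_le.2 h

lemma embed_Iio_Iio {o o' : Ordinal.{u}} (h : o.card ≤ o'.card) :
    Nonempty ((Set.Iio o) ↪ (Set.Iio o')) := by
  rw [← Cardinal.le_def, Ordinal.mk_Iio_ordinal, Ordinal.mk_Iio_ordinal]
  exact Cardinal.lift_le.2 h

lemma embed_set_Iio_of_card_le {S : Set α} {o : Ordinal.{u}} (h : #S ≤ o.card) :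
    Nonempty (S ↪ (Set.Iio o)) := by
  rw [← Cardinal.lift_mk_le', Ordinal.mk_Iio_ordinal, Cardinal.lift_lift]
  exact Cardinal.lift_le.2 h

/-- A well-order all of whose proper initial segments have size at most `c`
has size at most `succ c`. -/
lemma mk_le_succ_of_initSeg {Q : Type v} (r : Q → Q → Prop) [IsWellOrder Q r]
    (c : Cardinal.{v}) (h : ∀ q : Q, #{p // r p q} ≤ c) : #Q ≤ Order.succ c := by
  by_contra hcon
  push_neg at hcon
  have h1 : (Order.succ c).ord < Ordinal.type r := by
    have h2 : Order.succ c < (Ordinal.type r).card := by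
      rwa [Ordinal.card_type r]
    exact lt_of_lt_of_le (Cardinal.ord_lt_ord.2 h2) (Cardinal.ord_card_le _)
  obtain ⟨q, hq⟩ := Ordinal.typein_surj r h1
  have h3 := Ordinal.card_typein (r := r) q
  rw [hq, Cardinal.card_ord] at h3
  have := h3.le.trans (h q)
  exact absurd (Order.succ_le_iff.1 this) (lt_irrefl c)

end QuotMach

section Counting
variable {α : Type u} [LinearOrder α] [WellFoundedLT α] {U : Set (Set α)}

lemma count_zero (hU : IsNormalUFOn U) (hbig : ℵ₀ < #α)
    (s : α → Ordinal.{u}) (hs : ∀ a : α, s a ≤ (iterSucc #(Set.Iio a) 0).ord ⊔ 1) :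
    #(Quot (prodRel U s)) ≤ Cardinal.lift.{u+1} #α := by
  classical
  obtain ⟨huf, hnp, hcomp, hnorm⟩ := hU
  set D : Set α := {a | ∃ b : α, b < a} with hDdef
  have hD : D ∈ U := by
    have hsub : Dᶜ.Subsingleton := by
      intro x hx y hy
      by_contra hne
      rcases lt_or_gt_of_ne hne with h | h
      · exact hy ⟨x, h⟩
      · exact hx ⟨y, h⟩
    have h1 : #(Dᶜ : Set α) ≤ 1 := Cardinal.mk_le_one_iff_set_subsingleton.2 hsub
    have h2 : #(Dᶜ : Set α) < #α := lt_of_le_of_lt h1 (lt_trans Cardinal.one_lt_aleph0 hbig)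
    have := compl_mem huf (small_not_mem huf hnp hcomp h2)
    rwa [compl_compl] at this
  have hcard : ∀ a ∈ D, (s a).card ≤ #(Set.Iio a) := by
    intro a ha
    have h1 : 1 ≤ #(Set.Iio a) := by
      rw [Cardinal.one_le_iff_ne_zero, Cardinal.mk_ne_zero_iff]
      obtain ⟨b, hb⟩ := ha
      exact ⟨⟨b, hb⟩⟩
    have h2 : (1 : Ordinal) ≤ (#(Set.Iio a)).ord := by
      rw [← Cardinal.ord_one]
      exact Cardinal.ord_le_ord.2 h1
    have h3 := hs a
    rw [iterSucc_zero, max_eq_left h2] at h3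
    calc (s a).card ≤ ((#(Set.Iio a)).ord).card := Ordinal.card_le_card h3
      _ = #(Set.Iio a) := Cardinal.card_ord _
  have e : ∀ a, a ∈ D → ((Set.Iio (s a)) ↪ (Set.Iio a)) := fun a ha =>
    (embed_Iio_ord_of_card_le (hcard a ha)).some
  set code : {f : α → Ordinal.{u} // ∀ a, f a < s a} → α → α := fun f a =>
    if ha : a ∈ D then ((e a ha) ⟨f.1 a, f.2 a⟩).1 else a with hcodedef
  have hcode_lt : ∀ f, {a | code f a < a} ∈ U := by
    intro f
    refine mem_of_superset huf hD ?_
    intro a ha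
    show code f a < a
    rw [hcodedef]
    simp only [dif_pos ha]
    exact ((e a ha) ⟨f.1 a, f.2 a⟩).2
  have hconst : ∀ f, ∃ c, {a | code f a = c} ∈ U := fun f => hnorm (code f) (hcode_lt f)
  choose cval hcval using hconst
  set F : Quot (prodRel U s) → α := fun q => cval q.out with hFdef
  have hFinj : Function.Injective F := by
    intro q q' hqq
    set f := q.out with hf
    set f' := q'.out with hf'
    have hW : (D ∩ ({a | code f a = cval f} ∩ {a | code f' a = cval f'})) ∈ U :=
      huf.inter_mem _ hD _ (huf.inter_mem _ (hcval f) _ (hcval f'))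
    have hrel : prodRel U s f f' := by
      refine mem_of_superset huf hW ?_
      rintro a ⟨ha, h1, h2⟩
      show f.1 a = f'.1 a
      have hc : cval f = cval f' := hqq
      have h1' : code f a = cval f := h1
      have h2' : code f' a = cval f' := h2
      have h3 : code f a = code f' a := by rw [h1', h2', hc]
      rw [hcodedef] at h3
      simp only [dif_pos ha] at h3
      have h4 := (e a ha).injective (Subtype.ext h3)
      exact congrArg Subtype.val h4
    have := Quot.sound hrel
    rwa [hf, hf', Quot.out_eq, Quot.out_eq] at this
  calc #(Quot (prodRel U s)) ≤ Cardinal.lift.{u+1} #α := mk_le_lift_of_injective hFinj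
    _ = _ := rfl

end Counting

lemma count_succ {α : Type u} [LinearOrder α] [WellFoundedLT α] {U : Set (Set α)}
    (hU : IsNormalUFOn U) (hbig : ℵ₀ < #α) (ξ : Ordinal.{u})
    (IH : ∀ s' : α → Ordinal.{u}, (∀ a : α, s' a ≤ (iterSucc #(Set.Iio a) ξ).ord ⊔ 1) →
      #(Quot (prodRel U s')) ≤ Cardinal.lift.{u+1} (iterSucc #α ξ))
    (s : α → Ordinal.{u})
    (hs : ∀ a : α, s a ≤ (iterSucc #(Set.Iio a) (Order.succ ξ)).ord ⊔ 1) :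
    #(Quot (prodRel U s)) ≤ Cardinal.lift.{u+1} (iterSucc #α (Order.succ ξ)) := by
  classical
  obtain ⟨huf, hnp, hcomp, hnorm⟩ := hU
  set Q := Quot (prodRel U s) with hQdef
  set r : Q → Q → Prop := fun q q' => {a | q.out.1 a < q'.out.1 a} ∈ U with hrdef
  haveI : IsIrrefl Q r := ⟨by
    intro q hq
    have h0 : {a | q.out.1 a < q.out.1 a} = (∅ : Set α) := by ext a; simp
    apply huf.empty_not_mem
    rw [← h0]; exact hq⟩
  haveI : IsTrans Q r := ⟨by
    intro q1 q2 q3 h12 h23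
    refine mem_of_superset huf (huf.inter_mem _ h12 _ h23) ?_
    rintro a ⟨hx, hy⟩
    exact lt_trans (show q1.out.1 a < q2.out.1 a from hx)
      (show q2.out.1 a < q3.out.1 a from hy)⟩
  haveI : IsTrichotomous Q r := ⟨by
    intro q q' hL hG
    have h1 := compl_mem huf hL
    have h2 := compl_mem huf hG
    have h3 : prodRel U s q.out q'.out := by
      refine mem_of_superset huf (huf.inter_mem _ h1 _ h2) ?_
      rintro a ⟨hx, hy⟩
      simp only [Set.mem_compl_iff, Set.mem_setOf_eq, not_lt] at hx hy
      exact le_antisymm hy hx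
    have := Quot.sound h3
    rwa [Quot.out_eq, Quot.out_eq] at this⟩
  haveI : IsStrictOrder Q r := { }
  haveI : IsWellFounded Q r := ⟨by
    rw [RelEmbedding.wellFounded_iff_isEmpty]
    constructor
    intro emb
    have hA : ∀ n : ℕ, {a | (emb (n+1)).out.1 a < (emb n).out.1 a} ∈ U := fun n =>
      emb.map_rel_iff.2 (Nat.lt_succ_self n)
    obtain ⟨a, ha⟩ := nonempty_of_mem huf (sigma_complete huf hcomp hbig _ hA)
    simp only [Set.mem_iInter, Set.mem_setOf_eq] at ha
    exact (RelEmbedding.wellFounded_iff_isEmpty.1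
      (IsWellFounded.wf : WellFounded ((· < ·) : Ordinal.{u} → Ordinal.{u} → Prop))).elim
      (RelEmbedding.natGT (fun n => (emb n).out.1 a) ha)⟩
  haveI : IsWellOrder Q r := { }
  have hseg : ∀ q : Q, #{p // r p q} ≤ Cardinal.lift.{u+1} (iterSucc #α ξ) := by
    intro q
    set f := q.out with hfdef
    set s' : α → Ordinal.{u} := fun a => (iterSucc #(Set.Iio a) ξ).ord ⊔ 1 with hs'def
    have hs' : ∀ a : α, s' a ≤ (iterSucc #(Set.Iio a) ξ).ord ⊔ 1 := fun a => le_rfl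
    have hfcard : ∀ a, (f.1 a).card ≤ (s' a).card := by
      intro a
      have h1 := lt_of_lt_of_le (f.2 a) (hs a)
      rw [iterSucc_succ] at h1
      rcases lt_max_iff.1 h1 with h2 | h2
      · have h3 : (f.1 a).card ≤ iterSucc #(Set.Iio a) ξ :=
          Order.lt_succ_iff.1 (Cardinal.lt_ord.1 h2)
        calc (f.1 a).card ≤ iterSucc #(Set.Iio a) ξ := h3
          _ = ((iterSucc #(Set.Iio a) ξ).ord).card := (Cardinal.card_ord _).symm
          _ ≤ (s' a).card := Ordinal.card_le_card (le_max_left _ _)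
      · have h4 : f.1 a = 0 := Ordinal.lt_one_iff_zero.1 h2
        rw [h4, Ordinal.card_zero]
        exact zero_le
    have e : ∀ a, (Set.Iio (f.1 a)) ↪ (Set.Iio (s' a)) := fun a =>
      (embed_Iio_Iio (hfcard a)).some
    have hpos : ∀ a, (0 : Ordinal.{u}) < s' a := fun a =>
      lt_of_lt_of_le zero_lt_one (le_max_right _ _)
    set gf : {p : Q // r p q} → α → Ordinal.{u} := fun p a =>
      if h : p.1.out.1 a < f.1 a then (e a ⟨p.1.out.1 a, h⟩).1 else 0 with hgfdef
    have hgf : ∀ p a, gf p a < s' a := by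
      intro p a
      rw [hgfdef]
      by_cases h : p.1.out.1 a < f.1 a
      · simp only [dif_pos h]
        exact (e a ⟨p.1.out.1 a, h⟩).2
      · simp only [dif_neg h]
        exact hpos a
    set G : {p : Q // r p q} → Quot (prodRel U s') := fun p =>
      Quot.mk _ ⟨gf p, hgf p⟩ with hGdef
    have hGinj : Function.Injective G := by
      intro p p' hpp
      have hrel' : {a | gf p a = gf p' a} ∈ U := (prodRel_mk_eq_iff huf).1 hpp
      have hW : ({a | gf p a = gf p' a} ∩ ({a | p.1.out.1 a < f.1 a} ∩
          {a | p'.1.out.1 a < f.1 a})) ∈ U :=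
        huf.inter_mem _ hrel' _ (huf.inter_mem _ p.2 _ p'.2)
      have hrel : prodRel U s p.1.out p'.1.out := by
        refine mem_of_superset huf hW ?_
        rintro a ⟨h1, h2, h3⟩
        show p.1.out.1 a = p'.1.out.1 a
        have h2' : p.1.out.1 a < f.1 a := h2
        have h3' : p'.1.out.1 a < f.1 a := h3
        have h1' : gf p a = gf p' a := h1
        rw [hgfdef] at h1'
        simp only [dif_pos h2', dif_pos h3'] at h1'
        have h4 := (e a).injective (Subtype.ext h1')
        exact congrArg Subtype.val h4
      have := Quot.sound hrel
      rw [Quot.out_eq, Quot.out_eq] at this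
      exact Subtype.ext this
    calc #{p // r p q} ≤ #(Quot (prodRel U s')) := Cardinal.mk_le_of_injective hGinj
      _ ≤ Cardinal.lift.{u+1} (iterSucc #α ξ) := IH s' hs'
  have hfin := mk_le_succ_of_initSeg r (Cardinal.lift.{u+1} (iterSucc #α ξ)) hseg
  rw [← Cardinal.lift_succ, ← iterSucc_succ] at hfin
  exact hfin

lemma count_limit {α : Type u} [LinearOrder α] [WellFoundedLT α] {U : Set (Set α)}
    (hU : IsNormalUFOn U) (hbig : ℵ₀ < #α) {ξ : Ordinal.{u}} (hlim : Order.IsSuccLimit ξ)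
    (hxi : ξ.card < #α)
    (IH : ∀ η < ξ, ∀ s' : α → Ordinal.{u},
      (∀ a : α, s' a ≤ (iterSucc #(Set.Iio a) η).ord ⊔ 1) →
      #(Quot (prodRel U s')) ≤ Cardinal.lift.{u+1} (iterSucc #α η))
    (s : α → Ordinal.{u})
    (hs : ∀ a : α, s a ≤ (iterSucc #(Set.Iio a) ξ).ord ⊔ 1) :
    #(Quot (prodRel U s)) ≤ Cardinal.lift.{u+1} (iterSucc #α ξ) := by
  classical
  obtain ⟨huf, hnp, hcomp, hnorm⟩ := hU
  set Q := Quot (prodRel U s) with hQdef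
  set s' : Ordinal.{u} → α → Ordinal.{u} :=
    fun η a => (iterSucc #(Set.Iio a) η).ord ⊔ 1 with hs'def
  have hpos : ∀ η a, (0 : Ordinal.{u}) < s' η a := fun η a =>
    lt_of_lt_of_le zero_lt_one (le_max_right _ _)
  -- for each class, a single level η₀ < ξ works on a set in U
  have hkey : ∀ q : Q, ∃ η₀, η₀ < ξ ∧ {a | q.out.1 a < s' η₀ a} ∈ U := by
    intro q
    set f := q.out with hfdef
    have hchoice : ∀ a : α, ∃ η, η < ξ ∧ f.1 a < s' η a := by
      intro a
      have h1 := lt_of_lt_of_le (f.2 a) (hs a)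
      rcases lt_max_iff.1 h1 with h2 | h2
      · have h3 : (f.1 a).card < iterSucc #(Set.Iio a) ξ := Cardinal.lt_ord.1 h2
        obtain ⟨η, hη, h4⟩ := lt_iterSucc_limit hlim h3
        exact ⟨η, hη, lt_of_lt_of_le (Cardinal.lt_ord.2 h4) (le_max_left _ _)⟩
      · exact ⟨0, hlim.pos, lt_of_lt_of_le h2 (le_max_right _ _)⟩
    choose v hv1 hv2 using hchoice
    set PP : Set (Set α) := (fun η : Ordinal.{u} => v ⁻¹' {η}) '' (Set.Iio ξ) with hPPdef
    have hPPcard : #PP < #α := by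
      have t1 : Cardinal.lift.{u+1} #PP ≤ Cardinal.lift.{u, u+1} #(Set.Iio ξ) :=
        Cardinal.mk_image_le_lift
      rw [Ordinal.mk_Iio_ordinal, Cardinal.lift_lift] at t1
      have t2 : #PP ≤ ξ.card := Cardinal.lift_le.1 t1
      exact lt_of_le_of_lt t2 hxi
    have hPPcov : Set.univ ⊆ ⋃₀ PP := by
      intro a _
      exact ⟨v ⁻¹' {v a}, ⟨v a, hv1 a, rfl⟩, rfl⟩
    obtain ⟨A, hA, hAU⟩ := exists_piece huf hcomp PP hPPcard hPPcov
    obtain ⟨η₀, hη₀, rfl⟩ := hA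
    refine ⟨η₀, hη₀, mem_of_superset huf hAU ?_⟩
    intro a ha
    show f.1 a < s' η₀ a
    have hva : v a = η₀ := ha
    rw [← hva]
    exact hv2 a
  choose η₀ hη₀lt hη₀U using hkey
  set k : Q → Set.Iio ξ := fun q => ⟨η₀ q, hη₀lt q⟩ with hkdef
  -- count each fiber
  have hfiber : ∀ i : Set.Iio ξ, #{q : Q // k q = i} ≤
      Cardinal.lift.{u+1} (iterSucc #α i.1) := by
    intro i
    set gf : {q : Q // k q = i} → α → Ordinal.{u} := fun p a =>
      if h : p.1.out.1 a < s' i.1 a then p.1.out.1 a else 0 with hgfdef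
    have hgf : ∀ p a, gf p a < s' i.1 a := by
      intro p a
      rw [hgfdef]
      by_cases h : p.1.out.1 a < s' i.1 a
      · simpa only [dif_pos h] using h
      · simp only [dif_neg h]
        exact hpos i.1 a
    set G : {q : Q // k q = i} → Quot (prodRel U (s' i.1)) := fun p =>
      Quot.mk _ ⟨gf p, hgf p⟩ with hGdef
    have hmemU : ∀ p : {q : Q // k q = i}, {a | p.1.out.1 a < s' i.1 a} ∈ U := by
      intro p
      have h1 : η₀ p.1 = i.1 := congrArg Subtype.val p.2
      rw [← h1]
      exact hη₀U p.1
    have hGinj : Function.Injective G := by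
      intro p p' hpp
      have hrel' : {a | gf p a = gf p' a} ∈ U := (prodRel_mk_eq_iff huf).1 hpp
      have hW : ({a | gf p a = gf p' a} ∩ ({a | p.1.out.1 a < s' i.1 a} ∩
          {a | p'.1.out.1 a < s' i.1 a})) ∈ U :=
        huf.inter_mem _ hrel' _ (huf.inter_mem _ (hmemU p) _ (hmemU p'))
      have hrel : prodRel U s p.1.out p'.1.out := by
        refine mem_of_superset huf hW ?_
        rintro a ⟨h1, h2, h3⟩
        show p.1.out.1 a = p'.1.out.1 a
        have h2' : p.1.out.1 a < s' i.1 a := h2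
        have h3' : p'.1.out.1 a < s' i.1 a := h3
        have h1' : gf p a = gf p' a := h1
        rw [hgfdef] at h1'
        simpa only [dif_pos h2', dif_pos h3'] using h1'
      have := Quot.sound hrel
      rw [Quot.out_eq, Quot.out_eq] at this
      exact Subtype.ext this
    calc #{q : Q // k q = i} ≤ #(Quot (prodRel U (s' i.1))) :=
        Cardinal.mk_le_of_injective hGinj
      _ ≤ Cardinal.lift.{u+1} (iterSucc #α i.1) := IH i.1 i.2 (s' i.1) (fun a => le_rfl)
  -- assemble
  have h1 : #Q = Cardinal.sum (fun i : Set.Iio ξ => #{q : Q // k q = i}) := by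
    rw [← Cardinal.mk_sigma]
    exact Cardinal.mk_congr (Equiv.sigmaFiberEquiv k).symm
  have h2 : Cardinal.sum (fun i : Set.Iio ξ => #{q : Q // k q = i}) ≤
      Cardinal.sum (fun _ : Set.Iio ξ => Cardinal.lift.{u+1} (iterSucc #α ξ)) := by
    refine Cardinal.sum_le_sum _ _ fun i => ?_
    exact (hfiber i).trans (Cardinal.lift_le.2 (iterSucc_mono _ i.2.le))
  have h3 : Cardinal.sum (fun _ : Set.Iio ξ => Cardinal.lift.{u+1} (iterSucc #α ξ)) =
      #(Set.Iio ξ) * Cardinal.lift.{u+1} (iterSucc #α ξ) := Cardinal.sum_const' _ _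
  have h4 : #(Set.Iio ξ) * Cardinal.lift.{u+1} (iterSucc #α ξ) ≤
      Cardinal.lift.{u+1} (iterSucc #α ξ) := by
    rw [Ordinal.mk_Iio_ordinal, ← Cardinal.lift_mul]
    refine Cardinal.lift_le.2 ?_
    have t1 : ξ.card ≤ iterSucc #α ξ := hxi.le.trans (self_le_iterSucc _ _)
    have t2 : ℵ₀ ≤ iterSucc #α ξ := hbig.le.trans (self_le_iterSucc _ _)
    calc ξ.card * iterSucc #α ξ ≤ iterSucc #α ξ * iterSucc #α ξ :=
        mul_le_mul' t1 le_rfl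
      _ = iterSucc #α ξ := Cardinal.mul_eq_self t2
  rw [h1]
  exact (h2.trans h3.le).trans h4

lemma count_main {α : Type u} [LinearOrder α] [WellFoundedLT α] {U : Set (Set α)}
    (hU : IsNormalUFOn U) (hbig : ℵ₀ < #α) :
    ∀ ξ : Ordinal.{u}, ξ.card < #α → ∀ s : α → Ordinal.{u},
      (∀ a : α, s a ≤ (iterSucc #(Set.Iio a) ξ).ord ⊔ 1) →
      #(Quot (prodRel U s)) ≤ Cardinal.lift.{u+1} (iterSucc #α ξ) := by
  intro ξ
  induction ξ using Ordinal.limitRecOn with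
  | zero =>
    intro _ s hs
    exact count_zero hU hbig s hs |>.trans (Cardinal.lift_le.2 (self_le_iterSucc _ _))
  | add_one ξ IH =>
    intro hxi s hs
    rw [Ordinal.add_one_eq_succ] at hxi hs ⊢
    have hxi' : ξ.card < #α :=
      lt_of_le_of_lt (Ordinal.card_le_card (Order.le_succ ξ)) hxi
    exact count_succ hU hbig ξ (IH hxi') s hs
  | limit ξ hlim IH =>
    intro hxi s hs
    refine count_limit hU hbig hlim hxi ?_ s hs
    intro η hη s' hs'
    exact IH η hη (lt_of_le_of_lt (Ordinal.card_le_card hη.le) hxi) s' hs'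

/-- strong limit behaviour below a measurable -/
lemma powerset_small {α : Type u} {U : Set (Set α)} (huf : IsUltrafilterOn U)
    (hnp : IsNonprincipalOn U) (hcomp : IsKappaComplete #α U) (hbig : ℵ₀ < #α)
    {S : Set α} (hS : #S < #α) : #(Set (↥S)) ≤ #α := by
  classical
  by_contra hcon
  have hlt : #α ≤ #(Set (↥S)) := (lt_of_not_ge hcon).le
  obtain ⟨ι⟩ := (Cardinal.le_def α (Set (↥S))).1 hlt
  have hex : ∀ b : ↥S, ∃ B : Set α, B ∈ U ∧
      (B = {x : α | b ∈ ι x} ∨ B = {x : α | b ∈ ι x}ᶜ) := by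
    intro b
    rcases huf.mem_or_compl_mem {x : α | b ∈ ι x} with h | h
    · exact ⟨_, h, Or.inl rfl⟩
    · exact ⟨_, h, Or.inr rfl⟩
  choose B hBU hBeq using hex
  have hT : #(Set.range B) < #α := lt_of_le_of_lt Cardinal.mk_range_le hS
  have hmem : ⋂₀ (Set.range B) ∈ U := hcomp _ (by rintro _ ⟨b, rfl⟩; exact hBU b) hT
  have hsub : (⋂₀ (Set.range B)).Subsingleton := by
    intro x hx y hy
    have hxy : ι x = ι y := by
      ext b
      have hxB : x ∈ B b := hx _ ⟨b, rfl⟩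
      have hyB : y ∈ B b := hy _ ⟨b, rfl⟩
      rcases hBeq b with h | h
      · rw [h] at hxB hyB
        simp only [Set.mem_setOf_eq] at hxB hyB
        exact iff_of_true hxB hyB
      · rw [h] at hxB hyB
        simp only [Set.mem_compl_iff, Set.mem_setOf_eq] at hxB hyB
        exact iff_of_false hxB hyB
    exact ι.injective hxy
  have h1 : #(⋂₀ (Set.range B) : Set α) ≤ 1 := Cardinal.mk_le_one_iff_set_subsingleton.2 hsub
  have h2 : #(⋂₀ (Set.range B) : Set α) < #α :=
    lt_of_le_of_lt h1 (lt_trans Cardinal.one_lt_aleph0 hbig)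
  exact small_not_mem huf hnp hcomp h2 hmem


section RelDefs
variable {α : Type u} [LinearOrder α]

/-- Equality mod `U` on `α → α`. -/
def funRel (U : Set (Set α)) : (α → α) → (α → α) → Prop :=
  fun f g => {a | f a = g a} ∈ U

lemma funRel_mk_eq_iff {U : Set (Set α)} (huf : IsUltrafilterOn U) {f g : α → α} :
    Quot.mk (funRel U) f = Quot.mk (funRel U) g ↔ funRel U f g := by
  have hequiv : Equivalence (funRel U) := by
    constructor
    · intro f
      have : {a | f a = f a} = Set.univ := by ext a; simp
      show {a | f a = f a} ∈ U
      rw [this]; exact huf.univ_mem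
    · intro f g h
      exact mem_of_superset huf h fun a ha => ha.symm
    · intro f g h h1 h2
      refine mem_of_superset huf (huf.inter_mem _ h1 _ h2) ?_
      rintro a ⟨x, y⟩; exact x.trans y
  exact ⟨fun h => hequiv.eqvGen_iff.1 (Quot.eq.1 h), Quot.sound⟩

/-- Equality mod `U` on the functions captured by the slalom `φ`. -/
def capRel (U : Set (Set α)) (φ : α → Set α) :
    {f : α → α // {a | f a ∈ φ a} ∈ U} → {f : α → α // {a | f a ∈ φ a} ∈ U} → Prop :=
  fun f g => {a | f.1 a = g.1 a} ∈ U

lemma capRel_mk_eq_iff {U : Set (Set α)} (huf : IsUltrafilterOn U) {φ : α → Set α}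
    {f g : {f : α → α // {a | f a ∈ φ a} ∈ U}} :
    Quot.mk (capRel U φ) f = Quot.mk (capRel U φ) g ↔ capRel U φ f g := by
  have hequiv : Equivalence (capRel U φ) := by
    constructor
    · intro f
      have : {a | f.1 a = f.1 a} = Set.univ := by ext a; simp
      show {a | f.1 a = f.1 a} ∈ U
      rw [this]; exact huf.univ_mem
    · intro f g h
      exact mem_of_superset huf h fun a ha => ha.symm
    · intro f g h h1 h2
      refine mem_of_superset huf (huf.inter_mem _ h1 _ h2) ?_
      rintro a ⟨x, y⟩; exact x.trans y
  exact ⟨fun h => hequiv.eqvGen_iff.1 (Quot.eq.1 h), Quot.sound⟩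

lemma lift_mk_le_of_injective_up {β : Type u} {γ : Type (u+1)} {F : β → γ}
    (hF : Function.Injective F) : Cardinal.lift.{u+1} #β ≤ #γ := by
  have := Cardinal.lift_mk_le'.2 ⟨⟨F, hF⟩⟩
  rwa [Cardinal.lift_id'.{u, u+1}] at this

end RelDefs

/-- The quotient of `α → α` modulo `U` has size at least `2 ^ #α`. -/
lemma quot_lower {α : Type u} [LinearOrder α] [WellFoundedLT α] {U : Set (Set α)}
    (huf : IsUltrafilterOn U) (hnp : IsNonprincipalOn U) (hcomp : IsKappaComplete #α U)
    (hbig : ℵ₀ < #α) (hlike : IsKappaLike α) :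
    2 ^ #α ≤ #(Quot (funRel U)) := by
  classical
  have hc : ∀ a : α, Nonempty ((Set (↥(Set.Iio a))) ↪ α) := by
    intro a
    rw [← Cardinal.le_def]
    exact powerset_small huf hnp hcomp hbig (hlike a)
  have c : ∀ a : α, (Set (↥(Set.Iio a))) ↪ α := fun a => (hc a).some
  set code : Set α → α → α := fun S a => (c a) {b : ↥(Set.Iio a) | b.1 ∈ S} with hcodedef
  set J : Set α → Quot (funRel U) := fun S => Quot.mk _ (code S) with hJdef
  have hJinj : Function.Injective J := by
    intro S T hST
    have hrel : funRel U (code S) (code T) := (funRel_mk_eq_iff huf).1 hST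
    by_contra hne
    have hwit : ∃ x, (x ∈ S ∧ x ∉ T) ∨ (x ∈ T ∧ x ∉ S) := by
      by_contra hw
      apply hne
      ext x
      constructor
      · intro hx
        by_contra hxT
        exact hw ⟨x, Or.inl ⟨hx, hxT⟩⟩
      · intro hx
        by_contra hxS
        exact hw ⟨x, Or.inr ⟨hx, hxS⟩⟩
    obtain ⟨x, hx⟩ := hwit
    have hWsub : {a | code S a = code T a} ⊆ Set.Iic x := by
      intro a ha
      by_contra hax
      have hxa : x < a := lt_of_not_ge fun h => hax h
      have hne2 : {b : ↥(Set.Iio a) | b.1 ∈ S} ≠ {b : ↥(Set.Iio a) | b.1 ∈ T} := by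
        intro heq
        have := Set.ext_iff.1 heq ⟨x, hxa⟩
        simp only [Set.mem_setOf_eq] at this
        rcases hx with ⟨h1, h2⟩ | ⟨h1, h2⟩
        · exact h2 (this.1 h1)
        · exact h2 (this.2 h1)
      exact hne2 ((c a).injective ha)
    have hIic : #(Set.Iic x) < #α := by
      have h1 : Set.Iic x = Set.Iio x ∪ {x} := by
        ext y; simp [le_iff_lt_or_eq]
      rw [h1]
      refine lt_of_le_of_lt (Cardinal.mk_union_le _ _) ?_
      refine Cardinal.add_lt_of_lt hbig.le (hlike x) ?_
      simpa using lt_trans Cardinal.one_lt_aleph0 hbig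
    exact small_not_mem huf hnp hcomp (lt_of_le_of_lt (Cardinal.mk_le_mk_of_subset hWsub) hIic)
      hrel
  calc 2 ^ #α = #(Set α) := Cardinal.mk_set.symm
    _ ≤ #(Quot (funRel U)) := Cardinal.mk_le_of_injective hJinj

/-- Counting the classes captured by a single slalom. -/
lemma capture_count {α : Type u} [LinearOrder α] [WellFoundedLT α] {U : Set (Set α)}
    (hU : IsNormalUFOn U) (hbig : ℵ₀ < #α) (ξ : Ordinal.{u}) (hxi : ξ.card < #α)
    (φ : α → Set α) (hφ : ∀ a : α, #(φ a) ≤ iterSucc #(Set.Iio a) ξ) :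
    #(Quot (capRel U φ)) ≤ iterSucc #α ξ := by
  classical
  set s : α → Ordinal.{u} := fun a => (iterSucc #(Set.Iio a) ξ).ord ⊔ 1 with hsdef
  have hs : ∀ a : α, s a ≤ (iterSucc #(Set.Iio a) ξ).ord ⊔ 1 := fun a => le_rfl
  have hj : ∀ a : α, Nonempty ((φ a) ↪ (Set.Iio ((iterSucc #(Set.Iio a) ξ).ord))) := by
    intro a
    refine embed_set_Iio_of_card_le ?_
    rw [Cardinal.card_ord]
    exact hφ a
  have j : ∀ a : α, (φ a) ↪ (Set.Iio ((iterSucc #(Set.Iio a) ξ).ord)) := fun a => (hj a).some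
  set cf : {f : α → α // {a | f a ∈ φ a} ∈ U} → α → Ordinal.{u} := fun f a =>
    if h : f.1 a ∈ φ a then ((j a) ⟨f.1 a, h⟩).1 else 0 with hcfdef
  have hcf : ∀ f a, cf f a < s a := by
    intro f a
    rw [hcfdef]
    by_cases h : f.1 a ∈ φ a
    · simp only [dif_pos h]
      exact lt_of_lt_of_le ((j a) ⟨f.1 a, h⟩).2 (le_max_left _ _)
    · simp only [dif_neg h]
      exact lt_of_lt_of_le zero_lt_one (le_max_right _ _)
  set K : Quot (capRel U φ) → Quot (prodRel U s) := fun q =>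
    Quot.mk _ ⟨cf q.out, hcf q.out⟩ with hKdef
  have huf := hU.1
  have hKinj : Function.Injective K := by
    intro q q' hqq
    have hrel' : {a | cf q.out a = cf q'.out a} ∈ U := (prodRel_mk_eq_iff huf).1 hqq
    have hW : ({a | cf q.out a = cf q'.out a} ∩ ({a | q.out.1 a ∈ φ a} ∩
        {a | q'.out.1 a ∈ φ a})) ∈ U :=
      huf.inter_mem _ hrel' _ (huf.inter_mem _ q.out.2 _ q'.out.2)
    have hrel : capRel U φ q.out q'.out := by
      refine mem_of_superset huf hW ?_
      rintro a ⟨h1, h2, h3⟩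
      show q.out.1 a = q'.out.1 a
      have h2' : q.out.1 a ∈ φ a := h2
      have h3' : q'.out.1 a ∈ φ a := h3
      have h1' : cf q.out a = cf q'.out a := h1
      rw [hcfdef] at h1'
      simp only [dif_pos h2', dif_pos h3'] at h1'
      exact congrArg Subtype.val ((j a).injective (Subtype.ext h1'))
    have := Quot.sound hrel
    rwa [Quot.out_eq, Quot.out_eq] at this
  have h1 : Cardinal.lift.{u+1} #(Quot (capRel U φ)) ≤ #(Quot (prodRel U s)) :=
    lift_mk_le_of_injective_up hKinj
  have h2 := count_main hU hbig ξ hxi s hs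
  exact Cardinal.lift_le.1 (h1.trans h2)

/-- If `κ` is measurable, `ξ < κ` and `𝔡_{id^{+ξ}}(∈*) < 2^κ`,
then `2^κ ≤ κ^{+ξ}`. -/
theorem statement3 (α : Type u) [LinearOrder α] [WellFoundedLT α]
    (hlike : IsKappaLike α) (hmeas : IsMeasurableOn α)
    (ξ : Ordinal.{u}) (hξ : ξ < (#α).ord) (h : α → α)
    (hh : ∀ a : α, #(Set.Iio (h a)) = iterSucc #(Set.Iio a) ξ)
    (hlt : locD (bddIdeal α) h < 2 ^ #α) :
    2 ^ #α ≤ iterSucc #α ξ := by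
  classical
  have hbig := hmeas.1
  obtain ⟨U, hU⟩ := exists_normal_s3 hmeas
  have huf := hU.1
  have hnp := hU.2.1
  have hcomp := hU.2.2.1
  have hxi : ξ.card < #α := Cardinal.lt_ord.1 hξ
  haveI : Nontrivial α := Cardinal.one_lt_iff_nontrivial.1 (lt_trans Cardinal.one_lt_aleph0 hbig)
  -- the set defining `locD` is nonempty
  set Dset := { c | ∃ A : Set (α → Set α), #A = c ∧ (∀ φ ∈ A, IsSlalom h φ) ∧
    ∀ f : α → α, ∃ φ ∈ A, LocIn (bddIdeal α) f φ } with hDsetdef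
  have hDne : Dset.Nonempty := by
    refine ⟨#{φ : α → Set α | IsSlalom h φ}, {φ | IsSlalom h φ}, rfl, fun φ hφ => hφ, ?_⟩
    intro f
    set φf : α → Set α := fun a => {x | x = f a ∧ ∃ y : α, y < h a} with hφfdef
    have hsl : IsSlalom h φf := by
      intro a
      by_cases hy : ∃ y : α, y < h a
      · have h1 : φf a = {f a} := by
          ext x; simp [hφfdef, hy]
        rw [h1, Cardinal.mk_singleton]
        rw [Cardinal.one_le_iff_ne_zero, Cardinal.mk_ne_zero_iff]
        obtain ⟨y, hy'⟩ := hy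
        exact ⟨⟨y, hy'⟩⟩
      · have h1 : φf a = ∅ := by
          ext x; simp [hφfdef, hy]
        rw [h1]
        simp
    refine ⟨φf, hsl, ?_⟩
    show BddSet {a | f a ∉ φf a}
    have hbadsub : {a | f a ∉ φf a} ⊆ {a : α | ¬∃ y : α, y < a} := by
      intro a ha
      have hhy : ¬∃ y : α, y < h a := by
        intro hy
        exact ha ⟨rfl, hy⟩
      intro ⟨y, hya⟩
      have h0 : #(Set.Iio (h a)) = 0 := by
        rw [Cardinal.mk_eq_zero_iff]
        exact ⟨fun b => hhy ⟨b.1, b.2⟩⟩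
      have h1 : iterSucc #(Set.Iio a) ξ = 0 := (hh a).symm.trans h0
      have h2 : #(Set.Iio a) = 0 := le_antisymm (h1 ▸ self_le_iterSucc _ _) (zero_le)
      rw [Cardinal.mk_eq_zero_iff] at h2
      exact h2.elim' ⟨y, hya⟩
    have hEsub : {a : α | ¬∃ y : α, y < a}.Subsingleton := by
      intro x hx y hy
      by_contra hne
      rcases lt_or_gt_of_ne hne with hl | hl
      · exact hy ⟨x, hl⟩
      · exact hx ⟨y, hl⟩
    rcases Set.eq_empty_or_nonempty {a | f a ∉ φf a} with hemp | ⟨m, hm⟩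
    · exact ⟨Classical.arbitrary α, fun x hx => absurd (hemp ▸ hx) (Set.notMem_empty x)⟩
    · obtain ⟨x, hxm⟩ := exists_ne m
      have hmE := hbadsub hm
      have hmx : m < x := by
        rcases lt_or_gt_of_ne (Ne.symm hxm) with hl | hl
        · exact hl
        · exact absurd ⟨x, hl⟩ hmE
      refine ⟨x, fun z hz => ?_⟩
      have : z = m := hEsub (hbadsub hz) hmE
      rw [this]; exact hmx
  have hmem : locD (bddIdeal α) h ∈ Dset := csInf_mem hDne
  obtain ⟨A, hAcard, hAsl, hAloc⟩ := hmem
  -- every function is captured mod U by some slalom in A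
  have hcap : ∀ f : α → α, ∃ φ, φ ∈ A ∧ {a | f a ∈ φ a} ∈ U := by
    intro f
    obtain ⟨φ, hφA, hloc⟩ := hAloc f
    obtain ⟨b, hb⟩ := hloc
    refine ⟨φ, hφA, ?_⟩
    have hsubIio : {a | f a ∉ φ a} ⊆ Set.Iio b := fun a ha => hb a ha
    have hsmall : #({a | f a ∉ φ a} : Set α) < #α :=
      lt_of_le_of_lt (Cardinal.mk_le_mk_of_subset hsubIio) (hlike b)
    have := compl_mem huf (small_not_mem huf hnp hcomp hsmall)
    have hcompl : {a | f a ∉ φ a}ᶜ = {a | f a ∈ φ a} := by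
      ext a; simp
    rwa [hcompl] at this
  -- decompose the full quotient into fibers
  choose Φ hΦA hΦU using fun q : Quot (funRel U) => hcap q.out
  set k : Quot (funRel U) → ↥A := fun q => ⟨Φ q, hΦA q⟩ with hkdef
  have hfiber : ∀ i : ↥A, #{q : Quot (funRel U) // k q = i} ≤ iterSucc #α ξ := by
    intro i
    set G : {q : Quot (funRel U) // k q = i} → Quot (capRel U i.1) := fun p =>
      Quot.mk _ ⟨p.1.out, by
        have h1 : Φ p.1 = i.1 := congrArg Subtype.val p.2
        rw [← h1]
        exact hΦU p.1⟩ with hGdef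
    have hGinj : Function.Injective G := by
      intro p p' hpp
      have hrel : {a | p.1.out a = p'.1.out a} ∈ U := (capRel_mk_eq_iff huf).1 hpp
      have : funRel U p.1.out p'.1.out := hrel
      have := Quot.sound this
      rw [Quot.out_eq, Quot.out_eq] at this
      exact Subtype.ext this
    have h1 : #{q : Quot (funRel U) // k q = i} ≤ #(Quot (capRel U i.1)) :=
      Cardinal.mk_le_of_injective hGinj
    refine h1.trans (capture_count hU hbig ξ hxi i.1 ?_)
    intro a
    exact (hAsl i.1 i.2 a).trans_eq (hh a)
  have hdecomp : #(Quot (funRel U)) =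
      Cardinal.sum (fun i : ↥A => #{q : Quot (funRel U) // k q = i}) := by
    rw [← Cardinal.mk_sigma]
    exact Cardinal.mk_congr (Equiv.sigmaFiberEquiv k).symm
  have hsum : Cardinal.sum (fun i : ↥A => #{q : Quot (funRel U) // k q = i}) ≤
      #(↥A) * iterSucc #α ξ := by
    calc Cardinal.sum (fun i : ↥A => #{q : Quot (funRel U) // k q = i}) ≤
        Cardinal.sum (fun _ : ↥A => iterSucc #α ξ) := Cardinal.sum_le_sum _ _ hfiber
      _ = #(↥A) * iterSucc #α ξ := Cardinal.sum_const' _ _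
  have hchain : 2 ^ #α ≤ locD (bddIdeal α) h * iterSucc #α ξ := by
    rw [← hAcard]
    calc 2 ^ #α ≤ #(Quot (funRel U)) := quot_lower huf hnp hcomp hbig hlike
      _ = _ := hdecomp
      _ ≤ #(↥A) * iterSucc #α ξ := hsum
  by_contra hcon
  have hIlt : iterSucc #α ξ < 2 ^ #α := not_le.1 hcon
  have hml := Cardinal.mul_le_max (locD (bddIdeal α) h) (iterSucc #α ξ)
  have hmax : (locD (bddIdeal α) h ⊔ iterSucc #α ξ) ⊔ ℵ₀ < 2 ^ #α :=
    max_lt (max_lt hlt hIlt) (lt_trans hbig (Cardinal.cantor #α))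
  exact absurd (hchain.trans hml) (not_le.2 hmax)

end GenLoc
end

section
/- Let κ be a regular uncountable cardinal, let I be a proper ideal on κ extending the bounded ideal, and let h : κ → κ be such that {α < κ : h(α) ≤ γ} ∈ I for every γ < κ. Then κ⁺ ≤ 𝔟_h(∈^I) ≤ 𝔡_h(∈^I) ≤ 2^κ. -/
open Cardinal Set

universe u

namespace GenLoc

lemma small_bdd {α : Type u} [LinearOrder α] [WellFoundedLT α]
    (hlike : ∀ a : α, #(Set.Iio a) < #α) (hreg : (#α).IsRegular) (hunc : ℵ₀ < #α)
    (S : Set α) (hS : #S < #α) : ∃ b : α, ∀ x ∈ S, x < b := by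
  by_contra hcon
  push_neg at hcon
  have hcov : (Set.univ : Set α) ⊆ ⋃ x : S, Set.Iic x.1 := by
    intro b _
    obtain ⟨x, hxS, hbx⟩ := hcon b
    exact Set.mem_iUnion.2 ⟨⟨x, hxS⟩, hbx⟩
  have h1 : #α ≤ #(⋃ x : S, Set.Iic x.1) := by
    calc #α = #(Set.univ : Set α) := (Cardinal.mk_univ).symm
    _ ≤ _ := Cardinal.mk_le_mk_of_subset hcov
  have h2 : #(⋃ x : S, Set.Iic x.1) ≤ Cardinal.sum fun x : S => #(Set.Iic x.1) :=
    Cardinal.mk_iUnion_le_sum_mk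
  have h3 : Cardinal.sum (fun x : S => #(Set.Iic x.1)) < #α := by
    apply Cardinal.sum_lt_of_isRegular hreg hS
    intro x
    have : (Set.Iic x.1) ⊆ Set.Iio x.1 ∪ {x.1} := by
      intro y hy
      rcases lt_or_eq_of_le (Set.mem_Iic.1 hy) with h | h
      · exact Or.inl h
      · exact Or.inr (by simp [h])
    calc #(Set.Iic x.1) ≤ #((Set.Iio x.1 ∪ {x.1} : Set α)) := Cardinal.mk_le_mk_of_subset this
    _ ≤ #(Set.Iio x.1) + #({x.1} : Set α) := Cardinal.mk_union_le _ _
    _ < #α := by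
        apply Cardinal.add_lt_of_lt hunc.le (hlike x.1)
        simpa using (lt_of_le_of_lt (by norm_num : (1:Cardinal) ≤ ℵ₀) hunc)
  exact absurd (h1.trans h2) (not_le_of_gt h3)

lemma small_escape {α : Type u} (S : Set α) (hS : #S < #α) : ∃ x, x ∉ S := by
  by_contra hcon
  push_neg at hcon
  have : S = Set.univ := Set.eq_univ_of_forall hcon
  rw [this, Cardinal.mk_univ] at hS
  exact lt_irrefl _ hS

/-- For a proper ideal `I` extending the bounded ideal and `h` which is
`≤^I`-above all constants, `κ⁺ ≤ 𝔟_h(∈^I) ≤ 𝔡_h(∈^I) ≤ 2^κ`. -/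
theorem statement5 (α : Type u) [LinearOrder α] [WellFoundedLT α]
    (hlike : IsKappaLike α) (hreg : (#α).IsRegular) (hunc : ℵ₀ < #α)
    (I : Set (Set α)) (hI : IsIdeal I) (hproper : Set.univ ∉ I)
    (hbd : bddIdeal α ⊆ I) (h : α → α)
    (hh : ∀ γ : α, { a | h a ≤ γ } ∈ I) :
    Order.succ #α ≤ locB I h ∧ locB I h ≤ locD I h ∧ locD I h ≤ 2 ^ #α := by
  have hne : Nonempty α := Cardinal.mk_ne_zero_iff.mp (aleph0_pos.trans hunc).ne'
  have hsmall : ∀ (φ : α → Set α), IsSlalom h φ → ∀ a, #(φ a) < #α :=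
    fun φ hφ a => (hφ a).trans_lt (hlike (h a))
  -- nonemptiness of the locB set
  have hBne : { c | ∃ F : Set (α → α), #F = c ∧
      ∀ φ : α → Set α, IsSlalom h φ → ∃ f ∈ F, ¬ LocIn I f φ }.Nonempty := by
    refine ⟨#(Set.univ : Set (α → α)), Set.univ, rfl, ?_⟩
    intro φ hφ
    refine ⟨fun a => (small_escape (φ a) (hsmall φ hφ a)).choose, Set.mem_univ _, ?_⟩
    intro hloc
    have : { a | (fun a => (small_escape (φ a) (hsmall φ hφ a)).choose) a ∉ φ a }
        = Set.univ :=
      Set.eq_univ_of_forall fun a => (small_escape (φ a) (hsmall φ hφ a)).choose_spec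
    rw [LocIn, this] at hloc
    exact hproper hloc
  -- the witness for the locD set
  set g : (α → α) → (α → Set α) := fun f a => {x | x = f a ∧ ∃ y, y < h a} with hg
  have hDwit : ∃ A : Set (α → Set α), #A = #(Set.range g) ∧
      (∀ φ ∈ A, IsSlalom h φ) ∧ ∀ f : α → α, ∃ φ ∈ A, LocIn I f φ := by
    refine ⟨Set.range g, rfl, ?_, ?_⟩
    · rintro φ ⟨f, rfl⟩
      intro a
      by_cases H : ∃ y, y < h a
      · have h1 : g f a ⊆ {f a} := fun x hx => hx.1
        have h2 : (1 : Cardinal) ≤ #(Set.Iio (h a)) := by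
          have : Nonempty (Set.Iio (h a)) := ⟨⟨H.choose, H.choose_spec⟩⟩
          exact Cardinal.one_le_iff_ne_zero.2 (Cardinal.mk_ne_zero _)
        calc #(g f a) ≤ #({f a} : Set α) := Cardinal.mk_le_mk_of_subset h1
        _ = 1 := Cardinal.mk_singleton _
        _ ≤ _ := h2
      · have : g f a = ∅ := by
          ext x; simp only [hg, Set.mem_setOf_eq, Set.mem_empty_iff_false, iff_false]
          rintro ⟨-, hy⟩; exact H hy
        simp [this]
    · intro f
      refine ⟨g f, Set.mem_range_self f, ?_⟩
      have hsub : { a | f a ∉ g f a } ⊆ { a | h a ≤ Classical.arbitrary α } := by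
        intro a ha
        simp only [Set.mem_setOf_eq] at ha ⊢
        by_contra hle
        push_neg at hle
        exact ha ⟨rfl, ⟨Classical.arbitrary α, hle⟩⟩
      exact hI.subset_mem _ (hh (Classical.arbitrary α)) _ hsub
  have hDne : { c | ∃ A : Set (α → Set α), #A = c ∧ (∀ φ ∈ A, IsSlalom h φ) ∧
      ∀ f : α → α, ∃ φ ∈ A, LocIn I f φ }.Nonempty := ⟨#(Set.range g), hDwit⟩
  refine ⟨?_, ?_, ?_⟩
  · -- κ⁺ ≤ locB
    apply le_csInf hBne
    rintro c ⟨F, rfl, hF⟩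
    rw [Order.succ_le_iff]
    by_contra hle
    push_neg at hle
    obtain ⟨e⟩ : Nonempty (F ↪ α) := by
      rwa [← Cardinal.le_def]
    set φ : α → Set α := fun a => {x | ∃ p : F, e p < h a ∧ p.1 a = x} with hφdef
    have hφ : IsSlalom h φ := by
      intro a
      have hsurj : Function.Surjective
          (fun q : {p : F // e p < h a} => (⟨q.1.1 a, ⟨q.1, q.2, rfl⟩⟩ : φ a)) := by
        rintro ⟨x, p, hpe, hpx⟩
        exact ⟨⟨p, hpe⟩, Subtype.ext hpx⟩
      have hinj : Function.Injective
          (fun q : {p : F // e p < h a} => (⟨e q.1, q.2⟩ : Set.Iio (h a))) := by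
        rintro q1 q2 hq
        exact Subtype.ext (e.injective (congrArg Subtype.val hq))
      calc #(φ a) ≤ #{p : F // e p < h a} := Cardinal.mk_le_of_surjective hsurj
      _ ≤ #(Set.Iio (h a)) := Cardinal.mk_le_of_injective hinj
    obtain ⟨f, hfF, hnl⟩ := hF φ hφ
    apply hnl
    have hsub : { a | f a ∉ φ a } ⊆ { a | h a ≤ e ⟨f, hfF⟩ } := by
      intro a ha
      simp only [Set.mem_setOf_eq] at ha ⊢
      by_contra hlt
      push_neg at hlt
      exact ha ⟨⟨f, hfF⟩, hlt, rfl⟩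
    exact hI.subset_mem _ (hh _) _ hsub
  · -- locB ≤ locD
    apply le_csInf hDne
    rintro c ⟨A, rfl, hAs, hAd⟩
    have hch : ∀ (φ : A) (a : α), ∃ b : α, ∀ x ∈ φ.1 a, x < b :=
      fun φ a => small_bdd hlike hreg hunc _ (hsmall φ.1 (hAs φ.1 φ.2) a)
    set fsup : A → α → α := fun φ a => (hch φ a).choose with hfsup
    have hfsup_spec : ∀ (φ : A) (a : α), ∀ x ∈ φ.1 a, x < fsup φ a :=
      fun φ a => (hch φ a).choose_spec
    have hmem : #(Set.range fsup) ∈ { c | ∃ F : Set (α → α), #F = c ∧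
        ∀ ψ : α → Set α, IsSlalom h ψ → ∃ f ∈ F, ¬ LocIn I f ψ } := by
      refine ⟨Set.range fsup, rfl, ?_⟩
      intro ψ hψ
      by_contra hcon
      push_neg at hcon
      have hgch : ∀ a : α, ∃ b : α, ∀ x ∈ ψ a, x < b :=
        fun a => small_bdd hlike hreg hunc _ (hsmall ψ hψ a)
      set gg : α → α := fun a => (hgch a).choose with hgg
      have hgg_spec : ∀ a : α, ∀ x ∈ ψ a, x < gg a := fun a => (hgch a).choose_spec
      obtain ⟨φ, hφA, hgφ⟩ := hAd gg
      have hloc := hcon (fsup ⟨φ, hφA⟩) ⟨⟨φ, hφA⟩, rfl⟩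
      have hS : ({ a | gg a ∉ φ a } ∪ { a | fsup ⟨φ, hφA⟩ a ∉ ψ a }) ∈ I :=
        hI.union_mem _ hgφ _ hloc
      have hne' : ({ a | gg a ∉ φ a } ∪ { a | fsup ⟨φ, hφA⟩ a ∉ ψ a }) ≠ Set.univ := by
        intro hcontra
        rw [hcontra] at hS
        exact hproper hS
      obtain ⟨a, ha⟩ := Set.ne_univ_iff_exists_notMem _ |>.1 hne'
      simp only [Set.mem_union, Set.mem_setOf_eq, not_or, not_not] at ha
      have h1 : gg a < fsup ⟨φ, hφA⟩ a := hfsup_spec ⟨φ, hφA⟩ a _ ha.1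
      have h2 : fsup ⟨φ, hφA⟩ a < gg a := hgg_spec a _ ha.2
      exact lt_asymm h1 h2
    calc locB I h ≤ #(Set.range fsup) := csInf_le (OrderBot.bddBelow _) hmem
    _ ≤ #A := Cardinal.mk_range_le
  · -- locD ≤ 2^κ
    calc locD I h ≤ #(Set.range g) := csInf_le (OrderBot.bddBelow _) hDwit
    _ ≤ #(α → α) := Cardinal.mk_range_le
    _ = #α ^ #α := (Cardinal.power_def α α).symm
    _ = 2 ^ #α := Cardinal.power_self_eq hunc.le


end GenLoc
end

section
/- Let κ be a strongly inaccessible cardinal, I an ideal on κ, and h : κ → κ a function taking only infinite values. Then 𝔡_h(∈^I) · |∏_{α<κ} h(α)/I| = |κ^κ/I| (cardinal multiplication). -/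
open Cardinal Set

universe u

namespace GenLoc

section Aux11

variable {α : Type u}

private lemma ideal_equiv {I : Set (Set α)} (hI : IsIdeal I) {β : Type u} (p : β → α → α) :
    Equivalence fun f g : β => { a | p f a ≠ p g a } ∈ I := by
  constructor
  · intro f
    have he : { a | p f a ≠ p f a } = (∅ : Set α) := by ext a; simp
    rw [he]; exact hI.empty_mem
  · intro f g hfg
    have he : { a | p g a ≠ p f a } = { a | p f a ≠ p g a } := by ext a; exact ne_comm
    rw [he]; exact hfg
  · intro f g k h1 h2
    refine hI.subset_mem _ (hI.union_mem _ h1 _ h2) _ ?_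
    intro a ha
    by_contra hc
    simp only [Set.mem_union, Set.mem_setOf_eq, not_or, not_not] at hc
    exact ha (hc.1.trans hc.2)

private lemma rel_of_mk_eq {β : Type u} {r : β → β → Prop} (hr : Equivalence r) {a b : β}
    (h : Quot.mk r a = Quot.mk r b) : r a b :=
  hr.eqvGen_iff.mp (Quot.eqvGen_exact h)

end Aux11

/-- For strongly inaccessible `κ`, an ideal `I` and `h` with infinite
values, `𝔡_h(∈^I) · |∏_{α<κ} h(α)/I| = |κ^κ/I|`. -/
theorem statement11 (α : Type u) [LinearOrder α] [WellFoundedLT α]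
    (hlike : IsKappaLike α) (hinacc : (#α).IsInaccessible)
    (I : Set (Set α)) (hI : IsIdeal I) (h : α → α)
    (hinf : ∀ a : α, ℵ₀ ≤ #(Set.Iio (h a))) :
    locD I h * quotProd I h = quotFull I := by
  classical
  have hR : Equivalence fun f g : α → α => { a | f a ≠ g a } ∈ I :=
    ideal_equiv hI fun f => f
  have hRP : Equivalence fun f g : { f : α → α // ∀ a, f a < h a } =>
      { a | f.1 a ≠ g.1 a } ∈ I :=
    ideal_equiv hI Subtype.val
  have hneI : ∀ a : α, Nonempty ↥(Set.Iio (h a)) := fun a =>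
    Cardinal.mk_ne_zero_iff.mp (aleph0_pos.trans_le (hinf a)).ne'
  let pick : ∀ a : α, ↥(Set.Iio (h a)) := fun a => (hneI a).some
  -- singleton slaloms
  have hSingSl : ∀ f : α → α, IsSlalom h fun a => ({f a} : Set α) := by
    intro f a
    calc #({f a} : Set α) = 1 := Cardinal.mk_singleton _
      _ ≤ ℵ₀ := one_le_aleph0
      _ ≤ #(Set.Iio (h a)) := hinf a
  -- the dominating family of singleton slaloms indexed by representatives
  let D0 : Set (α → Set α) :=
    (fun f : α → α => fun a => ({f a} : Set α)) ''
      Set.range (Quot.out (r := fun f g : α → α => { a | f a ≠ g a } ∈ I))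
  have hmemD0 : #D0 ∈ { c | ∃ A : Set (α → Set α), #A = c ∧ (∀ φ ∈ A, IsSlalom h φ) ∧
      ∀ f : α → α, ∃ φ ∈ A, LocIn I f φ } := by
    refine ⟨D0, rfl, ?_, ?_⟩
    · rintro φ ⟨f, -, rfl⟩
      exact hSingSl f
    · intro f
      refine ⟨fun a => ({(Quot.mk _ f).out a} : Set α),
        ⟨(Quot.mk _ f).out, ⟨Quot.mk _ f, rfl⟩, rfl⟩, ?_⟩
      have hrel : { a | (Quot.mk (fun f g : α → α => { a | f a ≠ g a } ∈ I) f).out a ≠ f a }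
          ∈ I := rel_of_mk_eq hR (by rw [Quot.out_eq])
      have he : { a | f a ∉ ({(Quot.mk (fun f g : α → α => { a | f a ≠ g a } ∈ I) f).out a}
          : Set α) } = { a | (Quot.mk (fun f g : α → α => { a | f a ≠ g a } ∈ I) f).out a
          ≠ f a } := by
        ext a; simp [eq_comm]
      show _ ∈ I
      rw [he]
      exact hrel
  have hB : locD I h ≤ quotFull I := by
    refine le_trans (csInf_le' hmemD0) ?_
    refine le_trans (Cardinal.mk_image_le) ?_
    exact Cardinal.mk_range_le
  have hC : quotProd I h ≤ quotFull I := by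
    have hj : Function.Injective fun q : Quot fun f g : { f : α → α // ∀ a, f a < h a } =>
        { a | f.1 a ≠ g.1 a } ∈ I =>
        Quot.lift (fun f : { f : α → α // ∀ a, f a < h a } =>
          Quot.mk (fun f g : α → α => { a | f a ≠ g a } ∈ I) f.1)
          (fun _ _ hfg => Quot.sound hfg) q := by
      intro q1 q2
      induction q1 using Quot.ind with | _ f1 =>
      induction q2 using Quot.ind with | _ f2 =>
      intro heq
      exact Quot.sound (rel_of_mk_eq hR heq)
    exact Cardinal.mk_le_of_injective hj
  -- main inequality: quotFull ≤ locD * quotProd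
  obtain ⟨A, hAcard, hAsl, hAdom⟩ :
      ∃ A : Set (α → Set α), #A = locD I h ∧ (∀ φ ∈ A, IsSlalom h φ) ∧
        ∀ f : α → α, ∃ φ ∈ A, LocIn I f φ :=
    csInf_mem ⟨_, hmemD0⟩
  let emb : ∀ (φ : α → Set α) (a : α), ↥(φ a) → ↥(Set.Iio (h a)) := fun φ a =>
    if hne : Nonempty (↥(φ a) ↪ ↥(Set.Iio (h a))) then hne.some else fun _ => pick a
  have embInj : ∀ φ : α → Set α, IsSlalom h φ → ∀ a, Function.Injective (emb φ a) := by
    intro φ hφ a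
    have hne : Nonempty (↥(φ a) ↪ ↥(Set.Iio (h a))) := (Cardinal.le_def _ _).mp (hφ a)
    simp only [emb, dif_pos hne]
    exact hne.some.injective
  let gfun : (α → α) → (α → Set α) → { f : α → α // ∀ a, f a < h a } := fun f φ =>
    ⟨fun a => if hfa : f a ∈ φ a then (emb φ a ⟨f a, hfa⟩).1 else (pick a).1, by
      intro a
      dsimp only
      split
      · exact (emb φ a ⟨f a, ‹_›⟩).2
      · exact (pick a).2⟩
  let Φ : (Quot fun f g : α → α => { a | f a ≠ g a } ∈ I) → α → Set α := fun q =>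
    Classical.choose (hAdom q.out)
  have hΦmem : ∀ q, Φ q ∈ A := fun q => (Classical.choose_spec (hAdom q.out)).1
  have hΦcap : ∀ q, { a | q.out a ∉ Φ q a } ∈ I := fun q =>
    (Classical.choose_spec (hAdom q.out)).2
  let F : (Quot fun f g : α → α => { a | f a ≠ g a } ∈ I) →
      ↥A × (Quot fun f g : { f : α → α // ∀ a, f a < h a } => { a | f.1 a ≠ g.1 a } ∈ I) :=
    fun q => (⟨Φ q, hΦmem q⟩, Quot.mk _ (gfun q.out (Φ q)))
  have hFinj : Function.Injective F := by
    intro q1 q2 heq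
    have h1 : Φ q1 = Φ q2 := congrArg Subtype.val (congrArg Prod.fst heq)
    have h2 : Quot.mk (fun f g : { f : α → α // ∀ a, f a < h a } =>
        { a | f.1 a ≠ g.1 a } ∈ I) (gfun q1.out (Φ q1)) =
        Quot.mk _ (gfun q2.out (Φ q1)) := by
      have := congrArg Prod.snd heq
      simpa [F, ← h1] using this
    have hg : { a | (gfun q1.out (Φ q1)).1 a ≠ (gfun q2.out (Φ q1)).1 a } ∈ I :=
      rel_of_mk_eq hRP h2
    have hc1 : { a | q1.out a ∉ Φ q1 a } ∈ I := hΦcap q1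
    have hc2 : { a | q2.out a ∉ Φ q1 a } ∈ I := by rw [h1]; exact hΦcap q2
    have hsub : { a | q1.out a ≠ q2.out a } ⊆
        { a | q1.out a ∉ Φ q1 a } ∪ ({ a | q2.out a ∉ Φ q1 a } ∪
          { a | (gfun q1.out (Φ q1)).1 a ≠ (gfun q2.out (Φ q1)).1 a }) := by
      intro a ha
      by_contra hc
      simp only [Set.mem_union, Set.mem_setOf_eq, not_or, not_not] at hc
      obtain ⟨hm1, hm2, hge⟩ := hc
      apply ha
      simp only [gfun, dif_pos hm1, dif_pos hm2] at hge
      have heq' : emb (Φ q1) a ⟨q1.out a, hm1⟩ = emb (Φ q1) a ⟨q2.out a, hm2⟩ :=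
        Subtype.ext hge
      exact congrArg Subtype.val (embInj (Φ q1) (hAsl _ (hΦmem q1)) a heq')
    have hrel : { a | q1.out a ≠ q2.out a } ∈ I :=
      hI.subset_mem _ (hI.union_mem _ hc1 _ (hI.union_mem _ hc2 _ hg)) _ hsub
    calc q1 = Quot.mk _ q1.out := (Quot.out_eq q1).symm
      _ = Quot.mk _ q2.out := Quot.sound hrel
      _ = q2 := Quot.out_eq q2
  have hA : quotFull I ≤ locD I h * quotProd I h := by
    have hle := Cardinal.mk_le_of_injective hFinj
    rw [Cardinal.mk_prod, Cardinal.lift_id, Cardinal.lift_id, hAcard] at hle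
    exact hle
  refine le_antisymm ?_ hA
  by_cases hcase : ℵ₀ ≤ quotFull I
  · calc locD I h * quotProd I h ≤ quotFull I * quotFull I := mul_le_mul' hB hC
      _ = quotFull I := Cardinal.mul_eq_self hcase
  · have hαne : Nonempty α := Cardinal.mk_ne_zero_iff.mp
      (aleph0_pos.trans hinacc.1).ne'
    have huniv : Set.univ ∈ I := by
      by_contra hu
      have hai : Function.Injective fun a : α =>
          Quot.mk (fun f g : α → α => { x | f x ≠ g x } ∈ I) fun _ => a := by
        intro a b hab
        by_contra hne
        have hrel : { x : α | a ≠ b } ∈ I := rel_of_mk_eq hR hab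
        have he : { x : α | a ≠ b } = Set.univ := by ext x; simp [hne]
        rw [he] at hrel
        exact hu hrel
      have := Cardinal.mk_le_of_injective hai
      exact hcase (le_trans hinacc.1.le this)
    have hsub1 : quotFull I ≤ 1 := by
      show #(Quot fun f g : α → α => { a | f a ≠ g a } ∈ I) ≤ 1
      rw [Cardinal.le_one_iff_subsingleton]
      constructor
      intro q1 q2
      induction q1 using Quot.ind with | _ f1 =>
      induction q2 using Quot.ind with | _ f2 =>
      exact Quot.sound (hI.subset_mem _ huniv _ (Set.subset_univ _))
    calc locD I h * quotProd I h ≤ 1 * 1 := mul_le_mul' (hB.trans hsub1) (hC.trans hsub1)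
      _ = 1 := mul_one 1
      _ ≤ quotFull I := by
          haveI : Nonempty (Quot fun f g : α → α => { a | f a ≠ g a } ∈ I) :=
            ⟨Quot.mk _ id⟩
          exact Cardinal.one_le_iff_ne_zero.mpr (Cardinal.mk_ne_zero _)


end GenLoc
end
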